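/- arXiv:2101.02027 — 9 statements merged into one kernel-verified Lean document; each statement's English description precedes it below -/
import Mathlib

section
/- For every integer n ≥ 0, the sum over k from 0 to n of (1/(2k+1)) · C(2k,k) · C(2(n-k), n-k) equals 2^(4n) / ((2n+1) · C(2n,n)). -/
private lemma cb_rec (m : ℕ) :
    ((m : ℚ) + 1) * (Nat.choose (2 * (m + 1)) (m + 1) : ℚ) =
      2 * (2 * (m : ℚ) + 1) * (Nat.choose (2 * m) m : ℚ) := by
  have h := Nat.succ_mul_centralBinom_succ m
  rw [Nat.centralBinom_eq_two_mul_choose, Nat.centralBinom_eq_two_mul_choose] at h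
  exact_mod_cast congrArg (Nat.cast : ℕ → ℚ) h

private lemma cb_ne (m : ℕ) : (Nat.choose (2 * m) m : ℚ) ≠ 0 := by
  exact_mod_cast (Nat.centralBinom_pos m).ne'

private lemma key_step (K M A B C D : ℚ) (hK : 0 ≤ K) (hM : 0 ≤ M)
    (hC : (K + 1) * C = 2 * (2 * K + 1) * A)
    (hD : (M + 1) * D = 2 * (2 * M + 1) * B) :
    1 / (2 * K + 1) * A * D
      - 8 * ((K + M) + 1) / (2 * ((K + M)) + 3) * (1 / (2 * K + 1) * A * B)
    = (-(K + 1) * C * B / (((K + M) + 1) * (2 * ((K + M)) + 3)))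
      - (-K * A * D / (((K + M) + 1) * (2 * ((K + M)) + 3))) := by
  have h1 : 2 * K + 1 ≠ 0 := by positivity
  have h2 : K + 1 ≠ 0 := by positivity
  have h3 : M + 1 ≠ 0 := by positivity
  have h4 : (K + M) + 1 ≠ 0 := by positivity
  have h5 : 2 * (K + M) + 3 ≠ 0 := by positivity
  have hC' : C = 2 * (2 * K + 1) * A / (K + 1) := by
    field_simp
    linear_combination hC
  have hD' : D = 2 * (2 * M + 1) * B / (M + 1) := by
    field_simp
    linear_combination hD
  rw [hC', hD']
  field_simp
  ring

theorem arcsine_identity_0 (n : ℕ) :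
    ∑ k ∈ Finset.range (n + 1),
      (1 / (2 * (k : ℚ) + 1)) * (Nat.choose (2 * k) k : ℚ) *
        (Nat.choose (2 * (n - k)) (n - k) : ℚ) =
    (2 : ℚ) ^ (4 * n) / ((2 * (n : ℚ) + 1) * (Nat.choose (2 * n) n : ℚ)) := by
  induction n with
  | zero => norm_num
  | succ n ih =>
    set c : ℕ → ℚ := fun m => (Nat.choose (2 * m) m : ℚ) with hc
    -- the WZ certificate
    set g : ℕ → ℚ := fun k =>
      -(k : ℚ) * c k * c (n + 1 - k) / (((n : ℚ) + 1) * (2 * (n : ℚ) + 3)) with hg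
    have tel : ∑ k ∈ Finset.range (n + 1), (g (k + 1) - g k) = g (n + 1) - g 0 :=
      Finset.sum_range_sub g (n + 1)
    have hstep : ∀ k ∈ Finset.range (n + 1),
        (1 / (2 * (k : ℚ) + 1)) * c k * c (n + 1 - k)
          - (8 * ((n : ℚ) + 1) / (2 * (n : ℚ) + 3))
              * ((1 / (2 * (k : ℚ) + 1)) * c k * c (n - k)) = g (k + 1) - g k := by
      intro k hk
      have hkn : k ≤ n := Nat.lt_succ_iff.mp (Finset.mem_range.mp hk)
      have e1 : n + 1 - k = (n - k) + 1 := by omega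
      have e2 : n + 1 - (k + 1) = n - k := by omega
      have hM : ((n - k : ℕ) : ℚ) = (n : ℚ) - (k : ℚ) := Nat.cast_sub hkn
      have hn : (n : ℚ) = (k : ℚ) + ((n - k : ℕ) : ℚ) := by rw [hM]; ring
      rw [hg]
      simp only [e1, e2]
      have := key_step (k : ℚ) ((n - k : ℕ) : ℚ) (c k) (c (n - k)) (c (k + 1))
        (c ((n - k) + 1)) (by positivity) (by positivity)
        (by simp only [hc]; exact_mod_cast cb_rec k)
        (by simp only [hc]; exact_mod_cast cb_rec (n - k))
      rw [hn]
      push_cast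
      push_cast at this
      linear_combination this
    have hsum : ∑ k ∈ Finset.range (n + 1),
        ((1 / (2 * (k : ℚ) + 1)) * c k * c (n + 1 - k)
          - (8 * ((n : ℚ) + 1) / (2 * (n : ℚ) + 3))
              * ((1 / (2 * (k : ℚ) + 1)) * c k * c (n - k))) = g (n + 1) - g 0 := by
      rw [← tel]; exact Finset.sum_congr rfl hstep
    rw [Finset.sum_sub_distrib, ← Finset.mul_sum] at hsum
    have hS : ∑ k ∈ Finset.range (n + 1), (1 / (2 * (k : ℚ) + 1)) * c k * c (n + 1 - k)
        = (8 * ((n : ℚ) + 1) / (2 * (n : ℚ) + 3)) * ((2 : ℚ) ^ (4 * n) / ((2 * (n : ℚ) + 1) * c n))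
          + (g (n + 1) - g 0) := by
      rw [← ih]; linarith [hsum]
    rw [Finset.sum_range_succ]
    have hlast : n + 1 - (n + 1) = 0 := by omega
    rw [hS]
    have hg0 : g 0 = 0 := by simp [hg]
    have hgn1 : g (n + 1) = -((n : ℚ) + 1) * c (n + 1) * c 0 / (((n : ℚ) + 1) * (2 * (n : ℚ) + 3)) := by
      simp only [hg, Nat.add_sub_cancel_left, Nat.sub_self]
      push_cast
      ring_nf
    have hc0 : c 0 = 1 := by simp [hc]
    have hrec := cb_rec n
    have h1 : (2 * (n : ℚ) + 1) ≠ 0 := by positivity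
    have h3 : (2 * (n : ℚ) + 3) ≠ 0 := by positivity
    have h4 : ((n : ℚ) + 1) ≠ 0 := by positivity
    have hcn : c n ≠ 0 := cb_ne n
    have hcn1 : c (n + 1) ≠ 0 := cb_ne (n + 1)
    rw [hlast, hg0, hgn1, hc0]
    have hpow : (2 : ℚ) ^ (4 * (n + 1)) = 16 * (2 : ℚ) ^ (4 * n) := by
      rw [show 4 * (n + 1) = 4 * n + 4 by ring, pow_add]; ring
    have hrec' : c (n + 1) = 2 * (2 * (n : ℚ) + 1) * c n / ((n : ℚ) + 1) := by
      rw [eq_div_iff h4]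
      simp only [hc]
      linear_combination cb_rec n
    have hcc : ((Nat.choose (2 * (n + 1)) (n + 1) : ℕ) : ℚ) = c (n + 1) := rfl
    rw [hpow, hcc, hrec']
    simp only [Nat.mul_zero, Nat.choose_self, Nat.choose_zero_right, Nat.cast_one, Nat.cast_add]
    field_simp
    ring
end

section
/- For every integer n ≥ 0, the sum over k from 0 to n of (1/(k+1)) · C(2k,k) · C(2(n-k), n-k) equals C(2n+1, n). -/
theorem arcsine_identity_1 (n : ℕ) :
    ∑ k ∈ Finset.range (n + 1),
      (1 / ((k : ℚ) + 1)) * (Nat.choose (2 * k) k : ℚ) *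
        (Nat.choose (2 * (n - k)) (n - k) : ℚ) =
    (Nat.choose (2 * n + 1) n : ℚ) := by
  have cb : ∀ m : ℕ, ((m : ℚ) + 1) * (catalan m : ℚ) = (Nat.choose (2 * m) m : ℚ) := by
    intro m
    have := succ_mul_catalan_eq_centralBinom m
    rw [Nat.centralBinom_eq_two_mul_choose] at this
    exact_mod_cast this
  -- rewrite LHS as ∑ catalan k * choose (2(n-k)) (n-k)
  have hS : ∑ k ∈ Finset.range (n + 1),
      (1 / ((k : ℚ) + 1)) * (Nat.choose (2 * k) k : ℚ) *
        (Nat.choose (2 * (n - k)) (n - k) : ℚ) =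
      ∑ k ∈ Finset.range (n + 1),
        (catalan k : ℚ) * (Nat.choose (2 * (n - k)) (n - k) : ℚ) := by
    refine Finset.sum_congr rfl fun k _ => ?_
    have hk1 : ((k : ℚ) + 1) ≠ 0 := by positivity
    rw [← cb k]
    field_simp
  rw [hS]
  set S := ∑ k ∈ Finset.range (n + 1),
      (catalan k : ℚ) * (Nat.choose (2 * (n - k)) (n - k) : ℚ) with hSdef
  have hrefl : S = ∑ k ∈ Finset.range (n + 1),
      (catalan (n - k) : ℚ) * (Nat.choose (2 * k) k : ℚ) := by
    rw [hSdef, ← Finset.sum_range_reflect]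
    refine Finset.sum_congr rfl fun k hk => ?_
    have hk' : k ≤ n := Nat.lt_succ_iff.mp (Finset.mem_range.mp hk)
    have : n + 1 - 1 - k = n - k := by omega
    rw [this, Nat.sub_sub_self hk']
  have hdouble : 2 * S = ((n : ℚ) + 2) * (catalan (n + 1) : ℚ) := by
    have : S + S = ∑ k ∈ Finset.range (n + 1),
        (((n : ℚ) + 2) * ((catalan k : ℚ) * (catalan (n - k) : ℚ))) := by
      nth_rewrite 2 [hrefl]
      rw [hSdef, ← Finset.sum_add_distrib]
      refine Finset.sum_congr rfl fun k hk => ?_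
      have hk' : k ≤ n := Nat.lt_succ_iff.mp (Finset.mem_range.mp hk)
      have h1 := cb k
      have h2 := cb (n - k)
      have hcast : ((n - k : ℕ) : ℚ) = (n : ℚ) - (k : ℚ) := by
        exact Nat.cast_sub hk'
      rw [← h1, ← h2, hcast]
      ring
    have hc : (catalan (n + 1) : ℚ) =
        ∑ k ∈ Finset.range (n + 1), (catalan k : ℚ) * (catalan (n - k) : ℚ) := by
      rw [catalan_succ', Finset.Nat.sum_antidiagonal_eq_sum_range_succ_mk]
      push_cast
      rfl
    rw [two_mul, this, ← Finset.mul_sum, ← hc]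
  have hfin : ((n : ℚ) + 2) * (catalan (n + 1) : ℚ) =
      2 * (Nat.choose (2 * n + 1) n : ℚ) := by
    have h := cb (n + 1)
    have hch : Nat.choose (2 * (n + 1)) (n + 1) = 2 * Nat.choose (2 * n + 1) n := by
      have h2 : 2 * (n + 1) = (2 * n + 1) + 1 := by ring
      rw [h2, Nat.choose_succ_succ']
      have hsym : Nat.choose (2 * n + 1) (n + 1) = Nat.choose (2 * n + 1) n := by
        have := Nat.choose_symm (show n + 1 ≤ 2 * n + 1 by omega)
        simpa [show 2 * n + 1 - (n + 1) = n by omega] using this.symm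
      omega
    rw [hch] at h
    push_cast at h ⊢
    linarith
  have : 2 * S = 2 * (Nat.choose (2 * n + 1) n : ℚ) := by rw [hdouble, hfin]
  linarith
end

section
/- For every integer n ≥ 0, the sum over k+ℓ = n with k,ℓ ≥ 0 of (1/(k+1)) · C(2k,k) · C(2(ℓ+1), ℓ+1) equals 2 · C(2n+2, n). -/
open Finset

/-- Symmetry + Catalan recurrence: `2 ∑ Cₖ (ℓ+1) Cₗ = (m+2) C_{m+1}`. -/
lemma catalan_conv_sym (m : ℕ) :
    2 * ∑ p ∈ antidiagonal m, catalan p.1 * ((p.2 + 1) * catalan p.2) =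
      (m + 2) * catalan (m + 1) := by
  have hswap : ∑ p ∈ antidiagonal m, catalan p.1 * ((p.2 + 1) * catalan p.2) =
      ∑ p ∈ antidiagonal m, catalan p.2 * ((p.1 + 1) * catalan p.1) := by
    simpa using
      (Finset.Nat.sum_antidiagonal_swap (f := fun p => catalan p.2 * ((p.1 + 1) * catalan p.1)))
  rw [two_mul]
  nth_rewrite 2 [hswap]
  rw [← Finset.sum_add_distrib, catalan_succ', Finset.mul_sum]
  apply Finset.sum_congr rfl
  intro p hp
  have h : p.1 + p.2 = m := Finset.HasAntidiagonal.mem_antidiagonal.mp hp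
  subst h
  ring

lemma catalan_conv_main (n : ℕ) :
    2 * (∑ p ∈ antidiagonal n, catalan p.1 * ((p.2 + 2) * catalan (p.2 + 1)))
      + 2 * catalan (n + 1) = (n + 3) * catalan (n + 2) := by
  have h := catalan_conv_sym (n + 1)
  rw [Finset.Nat.sum_antidiagonal_succ'
    (f := fun p => catalan p.1 * ((p.2 + 1) * catalan p.2))] at h
  simp only [catalan_zero, mul_one] at h
  have : (n + 1) + 2 = n + 3 := by ring
  rw [this] at h
  rw [← h]
  ring

theorem arcsine_identity_2 (n : ℕ) :
    ∑ p ∈ Finset.HasAntidiagonal.antidiagonal n,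
      (1 / ((p.1 : ℚ) + 1)) * (Nat.choose (2 * p.1) p.1 : ℚ) *
        (Nat.choose (2 * (p.2 + 1)) (p.2 + 1) : ℚ) =
    2 * (Nat.choose (2 * n + 2) n : ℚ) := by
  set T : ℕ := ∑ p ∈ antidiagonal n, catalan p.1 * ((p.2 + 2) * catalan (p.2 + 1)) with hT
  have hsummand : ∀ p ∈ antidiagonal n,
      (1 / ((p.1 : ℚ) + 1)) * (Nat.choose (2 * p.1) p.1 : ℚ) *
        (Nat.choose (2 * (p.2 + 1)) (p.2 + 1) : ℚ) =
      ((catalan p.1 * ((p.2 + 2) * catalan (p.2 + 1)) : ℕ) : ℚ) := by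
    intro p _
    have h1 : ((p.1 + 1) * catalan p.1 : ℕ) = Nat.choose (2 * p.1) p.1 :=
      succ_mul_catalan_eq_centralBinom p.1
    have h2 : ((p.2 + 2) * catalan (p.2 + 1) : ℕ) = Nat.choose (2 * (p.2 + 1)) (p.2 + 1) :=
      succ_mul_catalan_eq_centralBinom (p.2 + 1)
    have h1q : ((p.1 : ℚ) + 1) * (catalan p.1 : ℚ) = (Nat.choose (2 * p.1) p.1 : ℚ) := by
      exact_mod_cast congrArg (Nat.cast : ℕ → ℚ) h1
    have h2q : ((p.2 : ℚ) + 2) * (catalan (p.2 + 1) : ℚ)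
        = (Nat.choose (2 * (p.2 + 1)) (p.2 + 1) : ℚ) := by
      exact_mod_cast congrArg (Nat.cast : ℕ → ℚ) h2
    have hne : ((p.1 : ℚ) + 1) ≠ 0 := by positivity
    push_cast
    rw [← h1q, ← h2q]
    field_simp
  rw [Finset.sum_congr rfl hsummand, ← Nat.cast_sum, ← hT]
  -- Now prove `(T : ℚ) = 2 * choose (2n+2) n`.
  have E : (2 * T + 2 * catalan (n + 1) : ℕ) = (n + 3) * catalan (n + 2) :=
    catalan_conv_main n
  have F1 : ((n + 2) * catalan (n + 1) : ℕ) = Nat.centralBinom (n + 1) :=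
    succ_mul_catalan_eq_centralBinom (n + 1)
  have F2 : ((n + 3) * catalan (n + 2) : ℕ) = Nat.centralBinom (n + 2) :=
    succ_mul_catalan_eq_centralBinom (n + 2)
  have F3 : ((n + 2) * Nat.centralBinom (n + 2) : ℕ)
      = 2 * (2 * (n + 1) + 1) * Nat.centralBinom (n + 1) :=
    Nat.succ_mul_centralBinom_succ (n + 1)
  have F4 : (Nat.centralBinom (n + 1) * (n + 1) : ℕ) = Nat.choose (2 * n + 2) n * (n + 2) := by
    have := Nat.choose_succ_right_eq (2 * n + 2) n
    have hsub : 2 * n + 2 - n = n + 2 := by omega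
    rw [hsub] at this
    rw [Nat.centralBinom]
    have h2 : 2 * (n + 1) = 2 * n + 2 := by ring
    rw [h2]
    exact this
  -- cast all to ℚ
  have Eq : (2 : ℚ) * T + 2 * catalan (n + 1) = ((n : ℚ) + 3) * catalan (n + 2) := by
    exact_mod_cast congrArg (Nat.cast : ℕ → ℚ) E
  have F1q : ((n : ℚ) + 2) * catalan (n + 1) = (Nat.centralBinom (n + 1) : ℚ) := by
    exact_mod_cast congrArg (Nat.cast : ℕ → ℚ) F1
  have F2q : ((n : ℚ) + 3) * catalan (n + 2) = (Nat.centralBinom (n + 2) : ℚ) := by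
    exact_mod_cast congrArg (Nat.cast : ℕ → ℚ) F2
  have F3q : ((n : ℚ) + 2) * Nat.centralBinom (n + 2)
      = 2 * (2 * ((n : ℚ) + 1) + 1) * Nat.centralBinom (n + 1) := by
    exact_mod_cast congrArg (Nat.cast : ℕ → ℚ) F3
  have F4q : (Nat.centralBinom (n + 1) : ℚ) * ((n : ℚ) + 1)
      = (Nat.choose (2 * n + 2) n : ℚ) * ((n : ℚ) + 2) := by
    exact_mod_cast congrArg (Nat.cast : ℕ → ℚ) F4
  have hne : ((n : ℚ) + 2) ≠ 0 := by positivity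
  have key : ((n : ℚ) + 2) * T = ((n : ℚ) + 2) * (2 * (Nat.choose (2 * n + 2) n : ℚ)) := by
    linear_combination (((n : ℚ) + 2) / 2) * Eq + (((n : ℚ) + 2) / 2) * F2q
      + (1 / 2 : ℚ) * F3q - F1q + 2 * F4q
  exact mul_left_cancel₀ hne key
end

section
/- For every integer n ≥ 0, ∑_{k=0}^{n} Catalan(k) · C(2(n-k), n-k) equals (1/2) · C(2(n+1), n+1), where Catalan(k) = C(2k,k)/(k+1). -/
theorem arcsine_identity_3 (n : ℕ) :
    ∑ k ∈ Finset.range (n + 1),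
      (catalan k : ℚ) * (Nat.choose (2 * (n - k)) (n - k) : ℚ) =
    (1 / 2) * (Nat.choose (2 * (n + 1)) (n + 1) : ℚ) := by
  have hcb : ∀ m : ℕ, ((2 * m).choose m : ℚ) = ((m + 1 : ℕ) : ℚ) * catalan m := by
    intro m
    rw [show (2 * m).choose m = m.centralBinom from rfl,
      ← succ_mul_catalan_eq_centralBinom]
    push_cast; ring
  have hconv : (∑ k ∈ Finset.range (n + 1), (catalan k : ℚ) * catalan (n - k)) =
      catalan (n + 1) := by
    rw [catalan_succ]
    rw [Fin.sum_univ_eq_sum_range (fun i => catalan i * catalan (n - i)) (n + 1)]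
    push_cast; rfl
  have hrefl : (∑ k ∈ Finset.range (n + 1),
        ((n - k + 1 : ℕ) : ℚ) * ((catalan k : ℚ) * catalan (n - k))) =
      ∑ k ∈ Finset.range (n + 1),
        ((k + 1 : ℕ) : ℚ) * ((catalan k : ℚ) * catalan (n - k)) := by
    rw [← Finset.sum_range_reflect (fun k => ((k + 1 : ℕ) : ℚ) *
      ((catalan k : ℚ) * catalan (n - k))) (n + 1)]
    apply Finset.sum_congr rfl
    intro k hk
    have hk' : k ≤ n := Nat.lt_succ_iff.mp (Finset.mem_range.mp hk)
    simp only [Nat.add_sub_cancel]  -- n + 1 - 1 - k = n - k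
    rw [Nat.sub_sub_self hk']
    ring
  have hL : (∑ k ∈ Finset.range (n + 1),
        (catalan k : ℚ) * (Nat.choose (2 * (n - k)) (n - k) : ℚ)) =
      ∑ k ∈ Finset.range (n + 1),
        ((n - k + 1 : ℕ) : ℚ) * ((catalan k : ℚ) * catalan (n - k)) := by
    apply Finset.sum_congr rfl
    intro k _
    rw [hcb (n - k)]; ring
  have hsum : (2 : ℚ) * (∑ k ∈ Finset.range (n + 1),
        ((n - k + 1 : ℕ) : ℚ) * ((catalan k : ℚ) * catalan (n - k))) =
      ((n : ℚ) + 2) * catalan (n + 1) := by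
    rw [two_mul]
    nth_rewrite 2 [hrefl]
    rw [← Finset.sum_add_distrib, ← hconv, Finset.mul_sum]
    apply Finset.sum_congr rfl
    intro k hk
    have hk' : k ≤ n := Nat.lt_succ_iff.mp (Finset.mem_range.mp hk)
    have : ((n - k : ℕ) : ℚ) = (n : ℚ) - k := by
      push_cast [hk']; ring
    push_cast [this]
    ring
  rw [hL, hcb (n + 1)]
  push_cast at hsum ⊢
  linarith
end

section
/- For every integer n ≥ 0, the sum over k from 0 to n of 2^(2(n-2k)+1) / (n-k+1)^2 · C(2k,k) / C(2(n-k+1), n-k+1) equals (2 · ((2n+1)!!)^2 / (2n+2)!) · ∑_{k=0}^{n} 1/(2k+1)^2. -/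
namespace Arc5

def c (k : ℕ) : ℚ := (Nat.choose (2*k) k : ℚ) / 4^k
def d (j : ℕ) : ℚ := 4^j * (Nat.factorial j : ℚ)^2 / (Nat.factorial (2*j+2) : ℚ)

lemma c_pos (k : ℕ) : 0 < c k := by
  unfold c
  have : 0 < Nat.choose (2*k) k := Nat.choose_pos (by omega)
  positivity

lemma d_pos (j : ℕ) : 0 < d j := by
  unfold d
  have := Nat.factorial_pos j
  have := Nat.factorial_pos (2*j+2)
  positivity

lemma c_succ (k : ℕ) : c (k+1) = c k * (2*(k:ℚ)+1) / (2*(k:ℚ)+2) := by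
  have h := Nat.succ_mul_centralBinom_succ k
  unfold Nat.centralBinom at h
  have h' : ((k:ℚ)+1) * ((2*(k+1)).choose (k+1) : ℚ) = 2*(2*(k:ℚ)+1) * ((2*k).choose k : ℚ) := by
    exact_mod_cast congrArg (Nat.cast (R := ℚ)) h
  unfold c
  rw [pow_succ]
  have h4 : (4:ℚ)^k ≠ 0 := by positivity
  field_simp
  linear_combination 2 * h'

lemma d_succ (j : ℕ) : d (j+1) = d j * (2*((j:ℚ)+1)^2) / (((j:ℚ)+2)*(2*(j:ℚ)+3)) := by
  unfold d
  have h1 : Nat.factorial (j+1) = (j+1) * Nat.factorial j := rfl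
  have h2 : (2*(j+1)+2) = (2*j+2) + 2 := by ring
  rw [h1, h2]
  have h3 : Nat.factorial ((2*j+2)+2) = ((2*j+2)+2) * (((2*j+2)+1) * Nat.factorial (2*j+2)) := by
    rw [Nat.factorial_succ, Nat.factorial_succ]
  rw [h3]
  have hf : (Nat.factorial (2*j+2) : ℚ) ≠ 0 := by exact_mod_cast (Nat.factorial_pos _).ne'
  push_cast
  field_simp
  ring

def R (n k : ℕ) : ℚ :=
  4*(k:ℚ)*(2*(k:ℚ)^3 - (8*(n:ℚ)+11)*(k:ℚ)^2 + 2*((n:ℚ)+1)*(5*(n:ℚ)+8)*(k:ℚ)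
      - ((n:ℚ)+1)^2*(4*(n:ℚ)+7))
    / ((2*(n:ℚ)+3)*((n:ℚ)+2-(k:ℚ))*(2*(n:ℚ)+3-2*(k:ℚ)))

set_option maxHeartbeats 2000000 in
lemma algebra_step (K J ck dj : ℚ)
    (h1 : J+2 ≠ 0) (h2 : 2*J+3 ≠ 0) (h3 : J+3 ≠ 0) (h4 : 2*J+5 ≠ 0)
    (h5 : 2*K+2 ≠ 0) (h6 : 2*K+2*J+5 ≠ 0) :
    (ck*(2*K+1)/(2*K+2)) * dj *
        (4*(K+1)*(2*(K+1)^3 - (8*(K+J+1)+11)*(K+1)^2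
            + 2*((K+J+1)+1)*(5*(K+J+1)+8)*(K+1) - ((K+J+1)+1)^2*(4*(K+J+1)+7))
          / ((2*K+2*J+5)*(J+2)*(2*J+3)))
      - ck * (dj*(2*(J+1)^2)/((J+2)*(2*J+3))) *
        (4*K*(2*K^3 - (8*(K+J+1)+11)*K^2
            + 2*((K+J+1)+1)*(5*(K+J+1)+8)*K - ((K+J+1)+1)^2*(4*(K+J+1)+7))
          / ((2*K+2*J+5)*(J+3)*(2*J+5)))
    = ck * ((2*(K+J+1)+4) *
              ((dj*(2*(J+1)^2)/((J+2)*(2*J+3))) * (2*(J+2)^2) / ((J+3)*(2*J+5)))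
          - (2*(K+J+1)+3) * (dj*(2*(J+1)^2)/((J+2)*(2*J+3)))) := by
  have h7 : K + 1 ≠ 0 := fun h => h5 (by linear_combination 2 * h)
  have h8 : 2*(K+J)+5 ≠ 0 := fun h => h6 (by linear_combination h)
  field_simp
  ring

lemma R_eval_succ (k j : ℕ) : R (k+j+1) (k+1) =
    4*((k:ℚ)+1)*(2*((k:ℚ)+1)^3 - (8*((k:ℚ)+(j:ℚ)+1)+11)*((k:ℚ)+1)^2
        + 2*(((k:ℚ)+(j:ℚ)+1)+1)*(5*((k:ℚ)+(j:ℚ)+1)+8)*((k:ℚ)+1)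
        - (((k:ℚ)+(j:ℚ)+1)+1)^2*(4*((k:ℚ)+(j:ℚ)+1)+7))
      / ((2*(k:ℚ)+2*(j:ℚ)+5)*((j:ℚ)+2)*(2*(j:ℚ)+3)) := by
  unfold R; push_cast; ring_nf

lemma R_eval_self (k j : ℕ) : R (k+j+1) k =
    4*(k:ℚ)*(2*(k:ℚ)^3 - (8*((k:ℚ)+(j:ℚ)+1)+11)*(k:ℚ)^2
        + 2*(((k:ℚ)+(j:ℚ)+1)+1)*(5*((k:ℚ)+(j:ℚ)+1)+8)*(k:ℚ)
        - (((k:ℚ)+(j:ℚ)+1)+1)^2*(4*((k:ℚ)+(j:ℚ)+1)+7))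
      / ((2*(k:ℚ)+2*(j:ℚ)+5)*((j:ℚ)+3)*(2*(j:ℚ)+5)) := by
  unfold R; push_cast; ring_nf

lemma step (k j : ℕ) :
    c (k+1) * d j * R (k+j+1) (k+1) - c k * d (j+1) * R (k+j+1) k =
      c k * ((2*((k:ℚ)+(j:ℚ)+1)+4) * d (j+2) - (2*((k:ℚ)+(j:ℚ)+1)+3) * d (j+1)) := by
  rw [c_succ, R_eval_succ, R_eval_self,
    show j+2 = (j+1)+1 from rfl, d_succ (j+1), d_succ j]
  push_cast
  linear_combination algebra_step (k:ℚ) (j:ℚ) (c k) (d j)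
    (by positivity) (by positivity) (by positivity) (by positivity)
    (by positivity) (by positivity)

lemma d_zero : d 0 = 1/2 := by norm_num [d, Nat.factorial]
lemma d_one : d 1 = 1/6 := by norm_num [d, Nat.factorial]
lemma R_zero (n : ℕ) : R n 0 = 0 := by simp [R]

lemma boundary (n : ℕ) :
    c n * d 0 * R n n + c n * ((2*(n:ℚ)+4) * d 1 - (2*(n:ℚ)+3) * d 0) =
      -(c (n+1) * ((n:ℚ)+1) * (2*(n:ℚ)+5) / (2*(n:ℚ)+3)) := by
  rw [c_succ, d_zero, d_one]
  unfold R
  rw [show (n:ℚ)+2-(n:ℚ) = 2 by ring, show 2*(n:ℚ)+3-2*(n:ℚ) = 3 by ring]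
  have h1 : (2*(n:ℚ)+3) ≠ 0 := by positivity
  have h2 : (2*(n:ℚ)+2) ≠ 0 := by positivity
  field_simp
  ring

lemma key (n : ℕ) :
    ∑ k ∈ Finset.range (n+1), c k * ((2*(n:ℚ)+4) * d (n+1-k) - (2*(n:ℚ)+3) * d (n-k))
      = -(c (n+1) * ((n:ℚ)+1) * (2*(n:ℚ)+5) / (2*(n:ℚ)+3)) := by
  rw [Finset.sum_range_succ]
  have htel : ∑ k ∈ Finset.range n,
      c k * ((2*(n:ℚ)+4) * d (n+1-k) - (2*(n:ℚ)+3) * d (n-k))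
      = c n * d (n-n) * R n n - c 0 * d (n-0) * R n 0 := by
    rw [← Finset.sum_range_sub (f := fun k => c k * d (n-k) * R n k)]
    apply Finset.sum_congr rfl
    intro k hk
    have hk' : k < n := Finset.mem_range.mp hk
    obtain ⟨j, hj⟩ : ∃ j, n = k + j + 1 := ⟨n - k - 1, by omega⟩
    subst hj
    have e1 : k + j + 1 - (k+1) = j := by omega
    have e2 : k + j + 1 - k = j + 1 := by omega
    have e3 : k + j + 1 + 1 - k = j + 2 := by omega
    simp only [e1, e2, e3]
    push_cast
    linear_combination -(step k j)
  rw [htel, R_zero, Nat.sub_self, show n+1-n = 1 by omega]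
  have := boundary n
  linear_combination this

lemma main (n : ℕ) : ∑ k ∈ Finset.range (n+1), c k * d (n-k)
    = c (n+1) * ∑ k ∈ Finset.range (n+1), 1/(2*(k:ℚ)+1)^2 := by
  induction n with
  | zero => norm_num [c, d, Nat.factorial]
  | succ n ih =>
    have h1 : (2*(n:ℚ)+3) ≠ 0 := by positivity
    have h2 : (2*(n:ℚ)+4) ≠ 0 := by positivity
    have hsplit : ∑ k ∈ Finset.range (n+1),
        c k * ((2*(n:ℚ)+4) * d (n+1-k) - (2*(n:ℚ)+3) * d (n-k))
        = (2*(n:ℚ)+4) * (∑ k ∈ Finset.range (n+1), c k * d (n+1-k))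
          - (2*(n:ℚ)+3) * (∑ k ∈ Finset.range (n+1), c k * d (n-k)) := by
      rw [Finset.mul_sum, Finset.mul_sum, ← Finset.sum_sub_distrib]
      exact Finset.sum_congr rfl (fun k _ => by ring)
    have hkey2 : (2*(n:ℚ)+3) * ((2*(n:ℚ)+4) * (∑ k ∈ Finset.range (n+1), c k * d (n+1-k))
        - (2*(n:ℚ)+3) * (∑ k ∈ Finset.range (n+1), c k * d (n-k)))
        = -(c (n+1) * ((n:ℚ)+1) * (2*(n:ℚ)+5)) := by
      rw [← hsplit, key n]
      field_simp
    rw [Finset.sum_range_succ, Finset.sum_range_succ (f := fun k => 1/(2*(k:ℚ)+1)^2),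
      Nat.sub_self, d_zero, c_succ (n+1)]
    push_cast
    field_simp
    ring_nf
    ring_nf at hkey2 ih
    linear_combination hkey2 + (2*(n:ℚ)+3)^2 * ih

lemma term_eq (k j : ℕ) :
    (2:ℚ)^(2*((j:ℤ)-(k:ℤ))+1) / ((j:ℚ)+1)^2 *
      ((Nat.choose (2*k) k : ℚ) / (Nat.choose (2*(j+1)) (j+1) : ℚ)) = 2 * (c k * d j) := by
  have hch : (Nat.choose (2*(j+1)) (j+1)) * (Nat.factorial (j+1) * Nat.factorial (j+1))
      = Nat.factorial (2*(j+1)) := by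
    have := Nat.choose_mul_factorial_mul_factorial (show j+1 ≤ 2*(j+1) by omega)
    rw [show 2*(j+1) - (j+1) = j+1 by omega] at this
    rwa [mul_assoc] at this
  rw [show 2*(j+1) = 2*j+2 by ring] at hch
  have hfs : (Nat.factorial (j+1) : ℚ) = ((j:ℚ)+1) * (Nat.factorial j : ℚ) := by
    rw [Nat.factorial_succ]; push_cast; ring
  have hchq : (Nat.choose (2*j+2) (j+1) : ℚ) *
      ((((j:ℚ)+1) * (Nat.factorial j : ℚ)) * (((j:ℚ)+1) * (Nat.factorial j : ℚ)))
      = (Nat.factorial (2*j+2) : ℚ) := by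
    rw [← hfs]; exact_mod_cast congrArg (Nat.cast (R := ℚ)) hch
  have hz : (2:ℚ)^(2*((j:ℤ)-(k:ℤ))+1) = (2:ℚ)^(2*j+1) / (2:ℚ)^(2*k) := by
    rw [show 2*((j:ℤ)-(k:ℤ))+1 = ((2*j+1 : ℕ) : ℤ) - ((2*k : ℕ) : ℤ) by push_cast; ring,
      zpow_sub₀ (by norm_num : (2:ℚ) ≠ 0), zpow_natCast, zpow_natCast]
  rw [hz]
  unfold c d
  rw [show (4:ℚ)^j = 2^(2*j) by rw [show (4:ℚ)=2^2 by norm_num, ← pow_mul],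
    show (4:ℚ)^k = 2^(2*k) by rw [show (4:ℚ)=2^2 by norm_num, ← pow_mul],
    show 2*(j+1) = 2*j+2 by ring]
  have hCHJ : (Nat.choose (2*j+2) (j+1) : ℚ) ≠ 0 := by
    have : 0 < Nat.choose (2*j+2) (j+1) := Nat.choose_pos (by omega)
    positivity
  have hj1 : ((j:ℚ)+1) ≠ 0 := by positivity
  have hfj : (Nat.factorial j : ℚ) ≠ 0 := by exact_mod_cast (Nat.factorial_pos j).ne'
  have hf2j : (Nat.factorial (2*j+2) : ℚ) ≠ 0 := by exact_mod_cast (Nat.factorial_pos _).ne'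
  have hp1 : (2:ℚ)^(2*k) ≠ 0 := by positivity
  have hp2 : (2:ℚ)^(2*j) ≠ 0 := by positivity
  field_simp
  linear_combination (-2 * (2:ℚ)^(2*j) * ((Nat.choose (2*k) k : ℚ))) * hchq

lemma rhs_eq (n : ℕ) :
    (Nat.doubleFactorial (2*n+1) : ℚ)^2 / (Nat.factorial (2*n+2) : ℚ) = c (n+1) := by
  have h1 := Nat.factorial_eq_mul_doubleFactorial (2*n+1)
  rw [show 2*n+1+1 = 2*(n+1) by ring, Nat.doubleFactorial_two_mul (n+1)] at h1
  have hch : (Nat.choose (2*(n+1)) (n+1)) * (Nat.factorial (n+1) * Nat.factorial (n+1))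
      = Nat.factorial (2*(n+1)) := by
    have := Nat.choose_mul_factorial_mul_factorial (show n+1 ≤ 2*(n+1) by omega)
    rw [show 2*(n+1) - (n+1) = n+1 by omega] at this
    rwa [mul_assoc] at this
  have h1q : (Nat.factorial (2*(n+1)) : ℚ)
      = 2^(n+1) * (Nat.factorial (n+1) : ℚ) * (Nat.doubleFactorial (2*n+1) : ℚ) := by
    exact_mod_cast congrArg (Nat.cast (R := ℚ)) h1
  have hchq : (Nat.choose (2*(n+1)) (n+1) : ℚ) *
      ((Nat.factorial (n+1) : ℚ) * (Nat.factorial (n+1) : ℚ))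
      = (Nat.factorial (2*(n+1)) : ℚ) := by
    exact_mod_cast congrArg (Nat.cast (R := ℚ)) hch
  unfold c
  rw [show 2*n+2 = 2*(n+1) by ring, h1q,
    show (4:ℚ)^(n+1) = 2^(n+1)*2^(n+1) by rw [show (4:ℚ)=2*2 by norm_num, mul_pow]]
  have hF : (Nat.factorial (n+1) : ℚ) ≠ 0 := by exact_mod_cast (Nat.factorial_pos _).ne'
  have hD : (Nat.doubleFactorial (2*n+1) : ℚ) ≠ 0 := by
    exact_mod_cast (Nat.doubleFactorial_pos _).ne'
  have hP : (2:ℚ)^(n+1) ≠ 0 := by positivity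
  rw [h1q] at hchq
  have hch2 : (Nat.choose (2*(n+1)) (n+1) : ℚ) * (Nat.factorial (n+1) : ℚ)
      = 2^(n+1) * (Nat.doubleFactorial (2*n+1) : ℚ) :=
    mul_right_cancel₀ hF (by linear_combination hchq)
  field_simp
  linear_combination (-1 : ℚ) * hch2

end Arc5

theorem arcsine_identity_5 (n : ℕ) :
    ∑ k ∈ Finset.range (n + 1),
      (2 : ℚ) ^ (2 * ((n : ℤ) - 2 * k) + 1) / ((n : ℚ) - k + 1) ^ 2 *
        ((Nat.choose (2 * k) k : ℚ) / (Nat.choose (2 * (n - k + 1)) (n - k + 1) : ℚ)) =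
    (2 * (Nat.doubleFactorial (2 * n + 1) : ℚ) ^ 2 / (Nat.factorial (2 * n + 2) : ℚ)) *
      ∑ k ∈ Finset.range (n + 1), 1 / (2 * (k : ℚ) + 1) ^ 2 := by
  have hL : ∑ k ∈ Finset.range (n + 1),
      (2 : ℚ) ^ (2 * ((n : ℤ) - 2 * k) + 1) / ((n : ℚ) - k + 1) ^ 2 *
        ((Nat.choose (2 * k) k : ℚ) / (Nat.choose (2 * (n - k + 1)) (n - k + 1) : ℚ))
      = ∑ k ∈ Finset.range (n + 1), 2 * (Arc5.c k * Arc5.d (n - k)) := by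
    apply Finset.sum_congr rfl
    intro k hk
    have hk' : k ≤ n := Nat.lt_succ_iff.mp (Finset.mem_range.mp hk)
    have e1 : 2 * ((n : ℤ) - 2 * k) + 1 = 2*(((n-k : ℕ):ℤ) - (k:ℤ)) + 1 := by omega
    have e2 : (n:ℚ) - k + 1 = ((n-k : ℕ):ℚ) + 1 := by rw [Nat.cast_sub hk']
    rw [e1, e2]
    exact Arc5.term_eq k (n-k)
  rw [hL, ← Finset.mul_sum, mul_div_assoc, Arc5.rhs_eq n]
  linear_combination 2 * Arc5.main n
end

section
/- For every integer n ≥ 0, the sum over k from 0 to n of 2^(2(n-2k)+1) / ((2k+1)·(n-k+1)) · C(2k,k) / C(2(n-k+1), n-k+1) equals (2 · ((2n+1)!!)^2 / (2n+2)!) · ∑_{k=0}^{n} 1/(2k+1)^2. -/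
noncomputable def aa (k : ℕ) : ℚ := ((2*k).choose k : ℚ) / 4 ^ k

lemma aa_pos (k : ℕ) : 0 < aa k := by
  unfold aa
  apply div_pos
  · exact_mod_cast Nat.choose_pos (by omega)
  · positivity

lemma aa_zero : aa 0 = 1 := by simp [aa]

lemma aa_succ (k : ℕ) : aa (k+1) * (2*(k:ℚ)+2) = aa k * (2*(k:ℚ)+1) := by
  have h := Nat.succ_mul_centralBinom_succ k
  simp only [Nat.centralBinom] at h
  have h2 : ((k:ℚ)+1) * ((2*(k+1)).choose (k+1) : ℚ) = 2*(2*(k:ℚ)+1) * ((2*k).choose k : ℚ) := by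
    exact_mod_cast h
  unfold aa
  have h4 : (4:ℚ)^(k+1) = 4 * 4^k := by ring
  field_simp
  linear_combination (2 : ℚ) * 4^k * h2

noncomputable def TT (n k : ℕ) : ℚ :=
  aa k / (aa (n-k) * ((2*(k:ℚ)+1) * (2*((n-k : ℕ):ℚ)+1)))

lemma term_eq (n k : ℕ) (h : k ≤ n) :
    (2 : ℚ) ^ (2 * ((n : ℤ) - 2 * k) + 1) / ((2 * (k : ℚ) + 1) * ((n : ℚ) - k + 1)) *
        ((Nat.choose (2 * k) k : ℚ) / (Nat.choose (2 * (n - k + 1)) (n - k + 1) : ℚ)) =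
    TT n k := by
  obtain ⟨j, rfl⟩ : ∃ j, n = k + j := ⟨n - k, by omega⟩
  have e1 : k + j - k = j := by omega
  have e2 : k + j - k + 1 = j + 1 := by omega
  rw [TT, e1]
  have he : 2 * (((k+j:ℕ) : ℤ) - 2 * k) + 1 = ((2*j+1 : ℕ) : ℤ) - ((2*k : ℕ) : ℤ) := by
    push_cast; ring
  rw [he, zpow_sub₀ (two_ne_zero), zpow_natCast, zpow_natCast]
  have hk : (Nat.choose (2*k) k : ℚ) = aa k * 4^k := by
    unfold aa; field_simp
  have hj : (Nat.choose (2*(j+1)) (j+1) : ℚ) = aa (j+1) * 4^(j+1) := by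
    unfold aa; field_simp
  rw [hk, hj]
  have haj := aa_succ j
  have h1 : aa j ≠ 0 := (aa_pos j).ne'
  have h2 : aa (j+1) ≠ 0 := (aa_pos (j+1)).ne'
  have h3 : (2*(k:ℚ)+1) ≠ 0 := by positivity
  have h4 : (2*(j:ℚ)+1) ≠ 0 := by positivity
  have h5 : ((k:ℚ) + j - k + 1) ≠ 0 := by
    have : ((k:ℚ) + j - k + 1) = j + 1 := by ring
    rw [this]; positivity
  have h24 : ((2:ℚ)^(2*k)) = 4^k := by
    rw [show (4:ℚ) = 2^2 by norm_num, ← pow_mul]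
  have h24' : ((2:ℚ)^(2*j+1)) = 2 * 4^j := by
    rw [show (4:ℚ) = 2^2 by norm_num, ← pow_mul]; ring
  push_cast
  rw [h24, h24']
  field_simp
  ring_nf
  ring_nf at haj
  linear_combination (-(2 * aa k * 4^j)) * haj

noncomputable def gg (n k : ℕ) : ℚ :=
  2*(k:ℚ)*aa k/((2*(n:ℚ)+3)*(2*((n+1-k : ℕ):ℚ)+1)* aa (n+1-k))

lemma step_pt (n k : ℕ) (h : k ≤ n) :
    (2*(n:ℚ)+4) * TT (n+1) k + (gg n (k+1) - gg n k) = (2*(n:ℚ)+3) * TT n k := by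
  obtain ⟨j, rfl⟩ : ∃ j, n = k + j := ⟨n - k, by omega⟩
  have e1 : k + j - k = j := by omega
  have e2 : k + j + 1 - k = j + 1 := by omega
  have e3 : k + j + 1 - (k + 1) = j := by omega
  simp only [TT, gg, e1, e2, e3]
  have hak := aa_succ k
  have haj := aa_succ j
  have h1 : aa j ≠ 0 := (aa_pos j).ne'
  have h2 : aa (j+1) ≠ 0 := (aa_pos (j+1)).ne'
  have h3 : (2*(k:ℚ)+1) ≠ 0 := by positivity
  have h4 : (2*(j:ℚ)+1) ≠ 0 := by positivity
  have h5 : (2*((j:ℚ)+1)+1) ≠ 0 := by positivity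
  have h6 : (2*((k:ℚ)+j)+3) ≠ 0 := by positivity
  have hak' : aa (k+1) = aa k * (2*(k:ℚ)+1) / (2*(k:ℚ)+2) := by
    have : (2*(k:ℚ)+2) ≠ 0 := by positivity
    field_simp
    linear_combination hak
  have haj' : aa (j+1) = aa j * (2*(j:ℚ)+1) / (2*(j:ℚ)+2) := by
    have : (2*(j:ℚ)+2) ≠ 0 := by positivity
    field_simp
    linear_combination haj
  rw [hak', haj']
  push_cast
  field_simp
  ring

noncomputable def SS (n : ℕ) : ℚ := ∑ k ∈ Finset.range (n+1), TT n k

lemma rec_lemma (n : ℕ) :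
    (2*(n:ℚ)+4) * SS (n+1) = (2*(n:ℚ)+3) * SS n + 2 * aa (n+1)/(2*(n:ℚ)+3) := by
  have h6 : (2*(n:ℚ)+3) ≠ 0 := by positivity
  have htel : ∑ k ∈ Finset.range (n+1), (gg n (k+1) - gg n k) = gg n (n+1) - gg n 0 := by
    exact Finset.sum_range_sub (gg n) (n+1)
  have hsum : ∑ k ∈ Finset.range (n+1),
      ((2*(n:ℚ)+4) * TT (n+1) k + (gg n (k+1) - gg n k)) = (2*(n:ℚ)+3) * SS n := by
    rw [SS, Finset.mul_sum]
    exact Finset.sum_congr rfl fun k hk => step_pt n k (Nat.lt_succ_iff.mp (Finset.mem_range.mp hk))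
  have hg0 : gg n 0 = 0 := by simp [gg]
  have hgn : gg n (n+1) = 2*((n:ℚ)+1)*aa (n+1)/(2*(n:ℚ)+3) := by
    rw [gg]
    have : n + 1 - (n+1) = 0 := by omega
    rw [this, aa_zero]
    push_cast
    field_simp
    ring
  have hlast : TT (n+1) (n+1) = aa (n+1)/(2*((n:ℚ)+1)+1) := by
    rw [TT]
    have : n + 1 - (n+1) = 0 := by omega
    rw [this, aa_zero]
    push_cast
    ring
  rw [Finset.sum_add_distrib, htel, hg0, hgn, sub_zero, ← Finset.mul_sum] at hsum
  have hS1 : SS (n+1) = (∑ k ∈ Finset.range (n+1), TT (n+1) k) + TT (n+1) (n+1) := by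
    rw [SS, Finset.sum_range_succ]
  rw [hS1, hlast, mul_add]
  have hx : (2*(n:ℚ)+4) * ∑ k ∈ Finset.range (n+1), TT (n+1) k
      = (2*(n:ℚ)+3) * SS n - 2*((n:ℚ)+1)*aa (n+1)/(2*(n:ℚ)+3) := by linarith
  rw [hx]
  have h7 : (2*((n:ℚ)+1)+1) ≠ 0 := by positivity
  field_simp
  ring

lemma main_lemma (n : ℕ) :
    SS n = (2*(n:ℚ)+1) * aa n / ((n:ℚ)+1) *
      ∑ k ∈ Finset.range (n+1), 1 / (2 * (k : ℚ) + 1) ^ 2 := by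
  induction n with
  | zero => simp [SS, TT, aa]
  | succ n ih =>
    have hrec := rec_lemma n
    rw [ih] at hrec
    have h4 : (2*(n:ℚ)+4) ≠ 0 := by positivity
    have h3 : (2*(n:ℚ)+3) ≠ 0 := by positivity
    have hn1 : ((n:ℚ)+1) ≠ 0 := by positivity
    have hn2 : ((n:ℚ)+1+1) ≠ 0 := by positivity
    have han := aa_succ n
    have ha : aa n ≠ 0 := (aa_pos n).ne'
    rw [Finset.sum_range_succ]
    apply mul_left_cancel₀ h4
    rw [hrec]
    push_cast
    have hsq : (2*((n:ℚ))+3) ^ 2 ≠ 0 := by positivity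
    have han' : aa (n+1) = aa n * (2*(n:ℚ)+1) / (2*(n:ℚ)+2) := by
      have : (2*(n:ℚ)+2) ≠ 0 := by positivity
      field_simp
      linear_combination han
    rw [han']
    field_simp
    ring

lemma coeff_eq (n : ℕ) :
    2 * (Nat.doubleFactorial (2 * n + 1) : ℚ) ^ 2 / (Nat.factorial (2 * n + 2) : ℚ)
      = (2*(n:ℚ)+1) * aa n / ((n:ℚ)+1) := by
  have h1 : (2*n+1).factorial = (2*n+1).doubleFactorial * (2*n).doubleFactorial :=
    Nat.factorial_eq_mul_doubleFactorial (2*n)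
  have h2 : (2*n).doubleFactorial = 2^n * n.factorial := Nat.doubleFactorial_two_mul n
  have h3 : (2*n+2).factorial = (2*n+2) * (2*n+1).factorial := Nat.factorial_succ (2*n+1)
  have hc0 := Nat.choose_mul_factorial_mul_factorial (show n ≤ 2*n by omega)
  rw [show 2*n - n = n by omega] at hc0
  have hc : ((2*n).choose n : ℚ) * n.factorial * n.factorial = (2*n).factorial := by
    exact_mod_cast hc0
  have h1' : ((2*n+1).factorial : ℚ) = ((2*n+1).doubleFactorial : ℚ) * (2^n * n.factorial) := by
    rw [h1, h2]; push_cast; ring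
  have h3' : ((2*n+2).factorial : ℚ) = (2*(n:ℚ)+2) * (2*n+1).factorial := by
    rw [h3]; push_cast; ring
  have h4' : ((2*n+1).factorial : ℚ) = (2*(n:ℚ)+1) * (2*n).factorial := by
    rw [Nat.factorial_succ (2*n)]; push_cast; ring
  have hf : (n.factorial : ℚ) ≠ 0 := by exact_mod_cast n.factorial_ne_zero
  have hp : ((2:ℚ)^n) ≠ 0 := by positivity
  have hn1 : ((n:ℚ)+1) ≠ 0 := by positivity
  have hF2 : ((2*n+2).factorial : ℚ) ≠ 0 := by exact_mod_cast (2*n+2).factorial_ne_zero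
  have hD : ((2*n+1).doubleFactorial : ℚ) = (2*n+1).factorial / (2^n * n.factorial) := by
    rw [h1']; field_simp
  have hC : ((2*n).choose n : ℚ) = (2*n).factorial / (n.factorial * n.factorial) := by
    rw [← hc]; field_simp
  have hF0 : ((2*n).factorial : ℚ) ≠ 0 := by exact_mod_cast (2*n).factorial_ne_zero
  unfold aa
  have h44 : ((4:ℚ)^n) = 2^n * 2^n := by
    rw [show (4:ℚ) = 2*2 by norm_num, mul_pow]
  rw [hD, hC, h3', h4', h44]
  field_simp

theorem arcsine_identity_6 (n : ℕ) :
    ∑ k ∈ Finset.range (n + 1),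
      (2 : ℚ) ^ (2 * ((n : ℤ) - 2 * k) + 1) / ((2 * (k : ℚ) + 1) * ((n : ℚ) - k + 1)) *
        ((Nat.choose (2 * k) k : ℚ) / (Nat.choose (2 * (n - k + 1)) (n - k + 1) : ℚ)) =
    (2 * (Nat.doubleFactorial (2 * n + 1) : ℚ) ^ 2 / (Nat.factorial (2 * n + 2) : ℚ)) *
      ∑ k ∈ Finset.range (n + 1), 1 / (2 * (k : ℚ) + 1) ^ 2 := by
  have hL : ∑ k ∈ Finset.range (n + 1),
      (2 : ℚ) ^ (2 * ((n : ℤ) - 2 * k) + 1) / ((2 * (k : ℚ) + 1) * ((n : ℚ) - k + 1)) *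
        ((Nat.choose (2 * k) k : ℚ) / (Nat.choose (2 * (n - k + 1)) (n - k + 1) : ℚ)) = SS n := by
    rw [SS]
    exact Finset.sum_congr rfl fun k hk =>
      term_eq n k (Nat.lt_succ_iff.mp (Finset.mem_range.mp hk))
  rw [hL, coeff_eq, main_lemma]
end

section
/- For every integer n ≥ 0, ∑_{k=0}^{n} 2^{-4k}/((2k+1)(n-k+1)) · C(2k,k)/C(2(n-k+1),n-k+1) = (((2n+1)!!)^2 / (2^{2n+3}·(2n+2)!)) · (π² − 2·ψ'(n + 3/2)). -/
open Real Finset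

/-- The trigamma function `ψ'(x) = ∑_{m=0}^∞ 1/(x+m)²`. -/
noncomputable def trigamma (x : ℝ) : ℝ := ∑' m : ℕ, 1 / (x + m) ^ 2

namespace Arcsine9

noncomputable def U (k : ℕ) : ℝ := (Nat.choose (2*k) k : ℝ) / (16 ^ k * (2 * (k:ℝ) + 1))
noncomputable def V (j : ℕ) : ℝ := 1 / (((j:ℝ) + 1) * (Nat.choose (2*j + 2) (j+1) : ℝ))

lemma choose_pos' (k : ℕ) : (0:ℝ) < (Nat.choose (2*k) k : ℝ) := by
  exact_mod_cast Nat.choose_pos (by omega)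

lemma U_pos (k : ℕ) : 0 < U k := by
  unfold U
  apply div_pos (choose_pos' k)
  positivity

lemma V_pos (j : ℕ) : 0 < V j := by
  unfold V
  apply div_pos one_pos
  have : (0:ℝ) < (Nat.choose (2*j+2) (j+1) : ℝ) := by
    exact_mod_cast Nat.choose_pos (by omega)
  positivity

lemma central_cast (k : ℕ) :
    ((k:ℝ) + 1) * (Nat.choose (2*(k+1)) (k+1) : ℝ) = 2 * (2*(k:ℝ)+1) * (Nat.choose (2*k) k : ℝ) := by
  have := Nat.succ_mul_centralBinom_succ k
  unfold Nat.centralBinom at this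
  exact_mod_cast this

lemma hU (k : ℕ) : U (k+1) = ((2*(k:ℝ)+1)^2 / (8*((k:ℝ)+1)*(2*(k:ℝ)+3))) * U k := by
  have h := central_cast k
  have hk1 : ((k:ℝ)+1) ≠ 0 := by positivity
  have h16 : (16:ℝ)^k ≠ 0 := by positivity
  have h1 : (2*(k:ℝ)+1) ≠ 0 := by positivity
  have h3 : (2*(k:ℝ)+3) ≠ 0 := by positivity
  unfold U
  rw [pow_succ]
  push_cast
  field_simp
  linear_combination (8*(2*(k:ℝ)+3)) * h

lemma hV (j : ℕ) : V (j+1) = (((j:ℝ)+1) / (2*(2*(j:ℝ)+3))) * V j := by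
  have h := central_cast (j+1)
  have key : ((j:ℝ)+2) * (Nat.choose (2*j+4) (j+2) : ℝ) = 2*(2*(j:ℝ)+3) * (Nat.choose (2*j+2) (j+1) : ℝ) := by
    have e1 : 2*(j+1+1) = 2*j+4 := by omega
    have e2 : 2*(j+1) = 2*j+2 := by omega
    rw [e1, e2] at h
    push_cast at h ⊢
    linarith [h]
  have hc1 : (0:ℝ) < (Nat.choose (2*j+2) (j+1) : ℝ) := by exact_mod_cast Nat.choose_pos (by omega)
  have hc2 : (0:ℝ) < (Nat.choose (2*j+4) (j+2) : ℝ) := by exact_mod_cast Nat.choose_pos (by omega)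
  unfold V
  have e1 : 2*(j+1)+2 = 2*j+4 := by omega
  have e2 : (j+1)+1 = j+2 := by omega
  rw [e1, e2]
  push_cast
  have hj2 : ((j:ℝ)+2) ≠ 0 := by positivity
  have hj1 : ((j:ℝ)+1) ≠ 0 := by positivity
  have h3 : (2*(j:ℝ)+3) ≠ 0 := by positivity
  field_simp
  linear_combination (-1:ℝ) * key

end Arcsine9

namespace Arcsine9

noncomputable def Cc (n : ℕ) : ℝ :=
  (Nat.doubleFactorial (2 * n + 1) : ℝ) ^ 2 /
    (2 ^ (2 * n + 3) * (Nat.factorial (2 * n + 2) : ℝ))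

lemma hCc (n : ℕ) : Cc (n+1) = ((2*(n:ℝ)+3) / (8*((n:ℝ)+2))) * Cc n := by
  have e1 : 2*(n+1)+1 = (2*n+1)+2 := by omega
  have e2 : 2*(n+1)+2 = ((2*n+2)+1)+1 := by omega
  unfold Cc
  rw [e1, e2, Nat.doubleFactorial_add_two, Nat.factorial_succ, Nat.factorial_succ]
  have hdf : (0:ℝ) < (Nat.doubleFactorial (2*n+1) : ℝ) := by
    exact_mod_cast Nat.doubleFactorial_pos _
  have hf : (0:ℝ) < (Nat.factorial (2*n+2) : ℝ) := by exact_mod_cast Nat.factorial_pos _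
  have h2 : (0:ℝ) < (2:ℝ)^(2*n+3) := by positivity
  have e3 : 2*(n+1)+3 = (2*n+3)+2 := by omega
  rw [e3, pow_add]
  push_cast
  field_simp
  ring

lemma hCU (n : ℕ) : Cc n = ((2*(n:ℝ)+1)^2 / (16*((n:ℝ)+1))) * U n := by
  induction n with
  | zero =>
    unfold Cc U
    norm_num [Nat.doubleFactorial, Nat.factorial]
  | succ n ih =>
    rw [hCc, hU, ih]
    have h1 : ((n:ℝ)+1) ≠ 0 := by positivity
    have h2 : ((n:ℝ)+2) ≠ 0 := by positivity
    have h3 : (2*(n:ℝ)+3) ≠ 0 := by positivity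
    push_cast
    field_simp
    ring

/-- WZ certificate. -/
noncomputable def Rf (n k : ℕ) : ℝ :=
  -((k:ℝ) * (2*(k:ℝ)+1) * ((n:ℝ)-(k:ℝ)+1)) /
    (2*((n:ℝ)+2)*(2*(n:ℝ)+3)*(2*(n:ℝ)-2*(k:ℝ)+3))

lemma mainalg (K M : ℝ) (h1 : K+1 ≠ 0) (h2 : 2*K+3 ≠ 0) (h3 : 2*M+3 ≠ 0)
    (h4 : 2*M+5 ≠ 0) (h5 : K+M+3 ≠ 0) (h6 : 2*K+2*M+5 ≠ 0) :
    (M+1+1)/(2*(2*(M+1)+3)) * ((M+1)/(2*(2*M+3)))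
      - (2*(K+M+1)+3)/(8*(K+M+1+2)) * ((M+1)/(2*(2*M+3)))
    = -((K+1) * (2*(K+1)+1) * (K+M+1-(K+1)+1)) /
        (2*(K+M+1+2)*(2*(K+M+1)+3)*(2*(K+M+1)-2*(K+1)+3))
        * ((2*K+1)^2/(8*(K+1)*(2*K+3)))
      - -(K * (2*K+1) * (K+M+1-K+1)) /
        (2*(K+M+1+2)*(2*(K+M+1)+3)*(2*(K+M+1)-2*K+3))
        * ((M+1)/(2*(2*M+3))) := by
  have e7 : 2*(K+M+1)-2*(K+1)+3 = 2*M+3 := by ring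
  have e8 : 2*(K+M+1)-2*K+3 = 2*M+5 := by ring
  have e9 : K+M+1+2 = K+M+3 := by ring
  have e10 : 2*(K+M+1)+3 = 2*K+2*M+5 := by ring
  have e11 : 2*(2*(M+1)+3) = 2*(2*M+5) := by ring
  rw [e7, e8, e9, e10, e11]
  have h3' : M*2+3 ≠ 0 := by contrapose! h3; linarith
  have h4' : M*2+5 ≠ 0 := by contrapose! h4; linarith
  have h6' : 2*(K+M)+5 ≠ 0 := by contrapose! h6; linarith
  field_simp
  ring

set_option maxHeartbeats 1000000 in
lemma per_k (n k : ℕ) (hk : k < n) :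
    U k * V (n+1-k) - ((2*(n:ℝ)+3)/(8*((n:ℝ)+2))) * (U k * V (n-k)) =
      Rf n (k+1) * U (k+1) * V (n-(k+1)) - Rf n k * U k * V (n-k) := by
  obtain ⟨m, rfl⟩ : ∃ m, n = k + m + 1 := ⟨n - k - 1, by omega⟩
  have e1 : k + m + 1 + 1 - k = m + 2 := by omega
  have e2 : k + m + 1 - k = m + 1 := by omega
  have e3 : k + m + 1 - (k + 1) = m := by omega
  rw [e1, e2, e3, hV (m+1), hV m, hU k]
  unfold Rf
  have h1 : ((k:ℝ)+1) ≠ 0 := by positivity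
  have h2 : (2*(k:ℝ)+3) ≠ 0 := by positivity
  have h3 : (2*(m:ℝ)+3) ≠ 0 := by positivity
  have h4 : (2*(m:ℝ)+5) ≠ 0 := by positivity
  have h5 : ((k:ℝ)+(m:ℝ)+3) ≠ 0 := by positivity
  have h6 : (2*(k:ℝ)+2*(m:ℝ)+5) ≠ 0 := by positivity
  have main := mainalg (k:ℝ) (m:ℝ) h1 h2 h3 h4 h5 h6
  push_cast
  linear_combination (U k * V m) * main

lemma key (n : ℕ) :
    ∑ k ∈ range (n+2), U k * V (n+1-k) =
      ((2*(n:ℝ)+3)/(8*((n:ℝ)+2))) * ∑ k ∈ range (n+1), U k * V (n-k) +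
      Cc n / (((n:ℝ)+2)*(2*(n:ℝ)+3)) := by
  set r : ℝ := (2*(n:ℝ)+3)/(8*((n:ℝ)+2)) with hr
  have tel : ∑ k ∈ range n,
      (U k * V (n+1-k) - r * (U k * V (n-k))) =
      Rf n n * U n * V (n-n) - Rf n 0 * U 0 * V (n-0) := by
    rw [← Finset.sum_range_sub (fun k => Rf n k * U k * V (n-k)) n]
    exact Finset.sum_congr rfl fun k hk => per_k n k (Finset.mem_range.mp hk)
  have hR0 : Rf n 0 = 0 := by unfold Rf; simp
  rw [Finset.sum_range_succ, Finset.sum_range_succ, Finset.sum_range_succ (fun k => U k * V (n-k))]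
  have hsplit : ∑ k ∈ range n, U k * V (n+1-k) =
      r * ∑ k ∈ range n, U k * V (n-k) + Rf n n * U n * V (n-n) := by
    have := tel
    rw [hR0] at this
    simp only [zero_mul] at this
    have h2 : ∑ k ∈ range n, (U k * V (n+1-k) - r * (U k * V (n-k))) =
        (∑ k ∈ range n, U k * V (n+1-k)) - r * ∑ k ∈ range n, U k * V (n-k) := by
      rw [Finset.sum_sub_distrib, Finset.mul_sum]
    rw [h2] at this
    linarith [this]
  rw [hsplit]
  -- boundary: remains to show
  have en : n + 1 - n = 1 := by omega
  have en2 : n + 1 - (n+1) = 0 := by omega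
  have en3 : n - n = 0 := by omega
  rw [en, en2, en3]
  have hV0 : V 0 = 1/2 := by unfold V; norm_num [Nat.choose]
  have hV1 : V 1 = 1/12 := by unfold V; norm_num [Nat.choose]
  have hb : Rf n n * U n * V 0 + U n * V 1 + U (n+1) * V 0 =
      r * (U n * V 0) + Cc n / (((n:ℝ)+2)*(2*(n:ℝ)+3)) := by
    rw [hV0, hV1, hU n, hCU n, hr]
    unfold Rf
    have h1 : ((n:ℝ)+1) ≠ 0 := by positivity
    have h2 : ((n:ℝ)+2) ≠ 0 := by positivity
    have h3 : (2*(n:ℝ)+3) ≠ 0 := by positivity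
    push_cast
    field_simp
    ring
  linear_combination hb

lemma Ssum (n : ℕ) : ∑ k ∈ range (n+1), U k * V (n-k) =
    8 * Cc n * ∑ k ∈ range (n+1), 1/(2*(k:ℝ)+1)^2 := by
  induction n with
  | zero =>
    have hV0 : V 0 = 1/2 := by unfold V; norm_num
    have hU0 : U 0 = 1 := by unfold U; norm_num
    have hC0 : Cc 0 = 1/16 := by unfold Cc; norm_num [Nat.doubleFactorial, Nat.factorial]
    simp [hV0, hU0, hC0]
    norm_num
  | succ n ih =>
    have hstep := key n
    rw [ih] at hstep
    rw [hstep, hCc n, Finset.sum_range_succ (fun k : ℕ => 1/(2*(k:ℝ)+1)^2) (n+1)]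
    set T := ∑ k ∈ range (n+1), 1/(2*(k:ℝ)+1)^2 with hT
    have h1 : ((n:ℝ)+2) ≠ 0 := by positivity
    have h2 : (2*(n:ℝ)+3) ≠ 0 := by positivity
    have h3 : (2*((n:ℝ)+1)+1) ≠ 0 := by positivity
    push_cast
    field_simp
    ring

end Arcsine9

namespace Arcsine9T

set_option maxHeartbeats 1000000 in
lemma hodd : HasSum (fun k : ℕ => (1:ℝ)/(2*(k:ℝ)+1)^2) (π^2/8) := by
  have htot : HasSum (fun n : ℕ => (1:ℝ) / (n : ℝ) ^ 2) (π ^ 2 / 6) := hasSum_zeta_two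
  have heven : HasSum (fun k : ℕ => (1:ℝ) / ((2*k : ℕ) : ℝ) ^ 2) (π ^ 2 / 24) := by
    have h := htot.mul_left (1/4)
    have hfun : (fun k : ℕ => (1:ℝ) / ((2*k : ℕ) : ℝ) ^ 2) =
        fun k : ℕ => (1/4) * ((1:ℝ)/(k:ℝ)^2) := by
      funext k
      by_cases hk : (k:ℝ) = 0
      · simp [hk]
      · push_cast
        field_simp
        ring
    have hval : (π:ℝ) ^ 2 / 24 = (1/4) * (π^2/6) := by ring
    rw [hfun, hval]
    exact h
  have hsodd : Summable (fun k : ℕ => (1:ℝ)/(2*(k:ℝ)+1)^2) := by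
    have hinj : Function.Injective (fun k : ℕ => 2*k+1) := by
      intro a b hab; dsimp at hab; omega
    have hs := htot.summable.comp_injective hinj
    have heq : ((fun n : ℕ => (1:ℝ) / (n : ℝ) ^ 2) ∘ (fun k : ℕ => 2*k+1)) =
        fun k : ℕ => (1:ℝ)/(2*(k:ℝ)+1)^2 := by
      funext k
      simp only [Function.comp_apply]
      push_cast
      ring_nf
    rwa [heq] at hs
  obtain ⟨c, hc⟩ := hsodd
  have hc' : HasSum (fun k : ℕ => (1:ℝ) / (((2*k+1 : ℕ)) : ℝ) ^ 2) c := by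
    have heq : (fun k : ℕ => (1:ℝ) / (((2*k+1 : ℕ)) : ℝ) ^ 2) =
        fun k : ℕ => (1:ℝ)/(2*(k:ℝ)+1)^2 := by
      funext k; push_cast; ring_nf
    rw [heq]; exact hc
  have hcomb := HasSum.even_add_odd (f := fun n : ℕ => (1:ℝ) / (n : ℝ) ^ 2) heven hc'
  have huniq := hcomb.unique htot
  have hcval : c = π^2/8 := by linarith
  rwa [hcval] at hc

lemma trig (n : ℕ) : π^2 - 2*trigamma ((n:ℝ)+3/2) =
    8 * ∑ k ∈ range (n+1), 1/(2*(k:ℝ)+1)^2 := by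
  set g : ℕ → ℝ := fun k => 4*(1/(2*(k:ℝ)+1)^2) with hg_def
  have hg : HasSum g (π^2/2) := by
    have h := hodd.mul_left 4
    have hval : (π:ℝ)^2/2 = 4 * (π^2/8) := by ring
    rw [hval]
    exact h
  have ht : trigamma ((n:ℝ)+3/2) = ∑' m : ℕ, g (m + (n+1)) := by
    unfold trigamma
    apply tsum_congr
    intro m
    have hx : ((n:ℝ) + 3/2 + (m:ℝ)) ≠ 0 := by positivity
    simp only [hg_def]
    have hy : (2*((m + (n+1) : ℕ) : ℝ)+1) = 2*((n:ℝ) + 3/2 + (m:ℝ)) := by push_cast; ring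
    rw [hy]
    field_simp
    ring
  have hsplit := Summable.sum_add_tsum_nat_add (f := g) (n+1) hg.summable
  rw [hg.tsum_eq] at hsplit
  have htr : trigamma ((n:ℝ)+3/2) = π^2/2 - ∑ i ∈ range (n+1), g i := by
    rw [ht]; linarith
  rw [htr, hg_def]
  rw [← Finset.mul_sum]
  ring

end Arcsine9T


theorem arcsine_identity_9 (n : ℕ) :
    ∑ k ∈ Finset.range (n + 1),
      (1 / 2 ^ (4 * k)) / ((2 * (k : ℝ) + 1) * ((n : ℝ) - k + 1)) *
        ((Nat.choose (2 * k) k : ℝ) / (Nat.choose (2 * (n - k + 1)) (n - k + 1) : ℝ)) =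
    ((Nat.doubleFactorial (2 * n + 1) : ℝ) ^ 2 /
        (2 ^ (2 * n + 3) * (Nat.factorial (2 * n + 2) : ℝ))) *
      (π ^ 2 - 2 * trigamma ((n : ℝ) + 3 / 2)) := by
  have hsum : ∑ k ∈ Finset.range (n + 1),
      (1 / 2 ^ (4 * k)) / ((2 * (k : ℝ) + 1) * ((n : ℝ) - k + 1)) *
        ((Nat.choose (2 * k) k : ℝ) / (Nat.choose (2 * (n - k + 1)) (n - k + 1) : ℝ)) =
      ∑ k ∈ Finset.range (n + 1), Arcsine9.U k * Arcsine9.V (n - k) := by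
    apply Finset.sum_congr rfl
    intro k hk
    have hkn : k ≤ n := by
      have := Finset.mem_range.mp hk; omega
    unfold Arcsine9.U Arcsine9.V
    have e1 : 2 * (n - k + 1) = 2 * (n - k) + 2 := by omega
    have e2 : n - k + 1 = (n - k) + 1 := rfl
    rw [e1, e2]
    have hc : ((n - k : ℕ) : ℝ) = (n : ℝ) - (k : ℝ) := by
      rw [Nat.cast_sub hkn]
    have h2 : ((2:ℝ)) ^ (4 * k) = 16 ^ k := by
      rw [pow_mul]
      norm_num
    rw [hc, h2]
    have hd1 : (0:ℝ) < (Nat.choose (2 * (n-k) + 2) ((n-k) + 1) : ℝ) := by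
      exact_mod_cast Nat.choose_pos (by omega)
    have hd2 : (0:ℝ) < (16:ℝ) ^ k := by positivity
    have hd3 : (0:ℝ) < 2 * (k:ℝ) + 1 := by positivity
    have hd4 : (0:ℝ) < (n:ℝ) - (k:ℝ) + 1 := by
      have : (k:ℝ) ≤ (n:ℝ) := by exact_mod_cast hkn
      linarith
    rw [div_div, one_div, one_div]
    field_simp
    try ring
    try exact Or.inl trivial
  rw [hsum, Arcsine9.Ssum n, Arcsine9T.trig n]
  have hcc : ((Nat.doubleFactorial (2 * n + 1) : ℝ) ^ 2 /
      (2 ^ (2 * n + 3) * (Nat.factorial (2 * n + 2) : ℝ))) = Arcsine9.Cc n := rfl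
  rw [hcc]
  ring
end

section
/- For all real x with |x| < 1, (arcsin x)² = (1/2)·∑_{ℓ=1}^{∞} (2x)^(2ℓ) / (ℓ²·C(2ℓ,ℓ)). -/
open Real Set

noncomputable def bb (n : ℕ) : ℝ :=
  4 ^ (n + 1) / (2 * (n + 1) * (Nat.choose (2 * (n + 1)) (n + 1) : ℝ))

lemma choose_cast_pos (n : ℕ) : (0:ℝ) < (Nat.choose (2 * (n + 1)) (n + 1) : ℝ) := by
  exact_mod_cast Nat.choose_pos (by omega)

lemma bb_pos (n : ℕ) : 0 < bb n := by
  have := choose_cast_pos n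
  unfold bb
  positivity

lemma bb_le_one (n : ℕ) : bb n ≤ 1 := by
  have h := Nat.four_pow_le_two_mul_self_mul_centralBinom (n + 1) (by omega)
  rw [Nat.centralBinom] at h
  have h' : (4:ℝ) ^ (n+1) ≤ 2 * ((n:ℝ)+1) * (Nat.choose (2*(n+1)) (n+1) : ℝ) := by
    exact_mod_cast h
  have hc := choose_cast_pos n
  rw [bb, div_le_one (by positivity)]
  calc (4:ℝ)^(n+1) ≤ _ := h'
    _ = _ := by push_cast; ring

lemma bb_rec (n : ℕ) : (2 * n + 3 : ℝ) * bb (n + 1) = (2 * n + 2 : ℝ) * bb n := by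
  have h := Nat.succ_mul_centralBinom_succ (n + 1)
  rw [Nat.centralBinom, Nat.centralBinom] at h
  have hR : ((n+1+1 : ℕ) : ℝ) * (Nat.choose (2*(n+1+1)) (n+1+1) : ℝ)
      = ((2*(2*(n+1)+1) : ℕ) : ℝ) * (Nat.choose (2*(n+1)) (n+1) : ℝ) := by
    exact_mod_cast h
  have hc1 := choose_cast_pos n
  have hc2 := choose_cast_pos (n+1)
  rw [bb, bb]
  push_cast at hR hc1 hc2 ⊢
  field_simp
  linear_combination (-2 * (4:ℝ)^(n+1)) * hR

lemma bb_zero : bb 0 = 1 := by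
  norm_num [bb]

section main

variable {r : ℝ} (hr0 : 0 < r) (hr1 : r < 1)

/-- the sum of the series for `arcsin y / √(1-y²)`. -/
noncomputable def Hf (y : ℝ) : ℝ := ∑' n : ℕ, bb n * y ^ (2 * n + 1)

include hr0 hr1

lemma sum_u1 : Summable (fun n : ℕ => (2*(n:ℝ)+1) * r ^ (2*n)) := by
  have hrr : r^2 < 1 := by nlinarith
  have h1 : Summable (fun n : ℕ => (n:ℝ) * (r^2)^n) := by
    simpa using summable_pow_mul_geometric_of_norm_lt_one 1
      (r := r^2) (by rw [Real.norm_eq_abs, abs_of_pos (by positivity)]; exact hrr)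
  have h2 : Summable (fun n : ℕ => (r^2)^n) :=
    summable_geometric_of_lt_one (by positivity) hrr
  have := (h1.mul_left 2).add h2
  refine this.congr fun n => ?_
  rw [pow_mul]
  ring

lemma sum_geo2 : Summable (fun n : ℕ => r ^ (2*n+1)) := by
  have hrr : r^2 < 1 := by nlinarith
  have h2 : Summable (fun n : ℕ => (r^2)^n) :=
    summable_geometric_of_lt_one (by positivity) hrr
  refine (h2.mul_left r).congr fun n => ?_
  rw [pow_add, pow_mul, pow_one]
  ring

omit hr0 hr1 in
lemma norm_term_le {y : ℝ} (hy : y ∈ Ioo (-r) r) (n : ℕ) :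
    ‖bb n * y ^ (2*n+1)‖ ≤ r ^ (2*n+1) := by
  have hyr : |y| ≤ r := le_of_lt (abs_lt.2 hy)
  have h1 : |y| ^ (2*n+1) ≤ r ^ (2*n+1) := pow_le_pow_left₀ (abs_nonneg y) hyr _
  have hb := bb_le_one n
  have hbp := (bb_pos n).le
  calc ‖bb n * y ^ (2*n+1)‖ = bb n * |y| ^ (2*n+1) := by
        rw [norm_mul, Real.norm_eq_abs, Real.norm_eq_abs, abs_of_nonneg hbp, abs_pow]
    _ ≤ 1 * (r ^ (2*n+1)) := by
        apply mul_le_mul hb h1 (by positivity) zero_le_one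
    _ = r ^ (2*n+1) := one_mul _

omit hr0 hr1 in
lemma norm_dterm_le {y : ℝ} (hy : y ∈ Ioo (-r) r) (n : ℕ) :
    ‖bb n * ((2*(n:ℝ)+1) * y ^ (2*n))‖ ≤ (2*(n:ℝ)+1) * r ^ (2*n) := by
  have hyr : |y| ≤ r := le_of_lt (abs_lt.2 hy)
  have h1 : |y| ^ (2*n) ≤ r ^ (2*n) := pow_le_pow_left₀ (abs_nonneg y) hyr _
  have hb := bb_le_one n
  have hbp := (bb_pos n).le
  have hcoef : (0:ℝ) ≤ 2*(n:ℝ)+1 := by positivity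
  calc ‖bb n * ((2*(n:ℝ)+1) * y ^ (2*n))‖ = bb n * ((2*(n:ℝ)+1) * |y| ^ (2*n)) := by
        simp [abs_mul, abs_pow, abs_of_nonneg hbp, abs_of_nonneg hcoef]
    _ ≤ 1 * ((2*(n:ℝ)+1) * r ^ (2*n)) := by
        apply mul_le_mul hb (by nlinarith [pow_nonneg (abs_nonneg y) (2*n)]) (by positivity) zero_le_one
    _ = _ := one_mul _

lemma summable_term {y : ℝ} (hy : y ∈ Ioo (-r) r) :
    Summable (fun n : ℕ => bb n * y ^ (2*n+1)) :=
  Summable.of_norm_bounded (sum_geo2 hr0 hr1) (norm_term_le hy)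

lemma summable_dterm {y : ℝ} (hy : y ∈ Ioo (-r) r) :
    Summable (fun n : ℕ => bb n * ((2*(n:ℝ)+1) * y ^ (2*n))) :=
  Summable.of_norm_bounded (sum_u1 hr0 hr1) (norm_dterm_le hy)

omit hr0 hr1 in
lemma hasDerivAt_term (n : ℕ) (y : ℝ) :
    HasDerivAt (fun z : ℝ => bb n * z ^ (2*n+1)) (bb n * ((2*(n:ℝ)+1) * y ^ (2*n))) y := by
  have := (hasDerivAt_pow (2*n+1) y).const_mul (bb n)
  refine this.congr_deriv ?_
  push_cast
  ring_nf

lemma hasDerivAt_Hf {y : ℝ} (hy : y ∈ Ioo (-r) r) :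
    HasDerivAt Hf (∑' n : ℕ, bb n * ((2*(n:ℝ)+1) * y ^ (2*n))) y := by
  have h0 : (0:ℝ) ∈ Ioo (-r) r := Set.mem_Ioo.2 ⟨by linarith, hr0⟩
  exact hasDerivAt_tsum_of_isPreconnected (sum_u1 hr0 hr1) isOpen_Ioo
    (convex_Ioo _ _).isPreconnected
    (fun n z _ => hasDerivAt_term n z)
    (fun n z hz => norm_dterm_le hz n)
    h0 (summable_term hr0 hr1 h0) hy

lemma key_identity {y : ℝ} (hy : y ∈ Ioo (-r) r) :
    (∑' n : ℕ, bb n * ((2*(n:ℝ)+1) * y ^ (2*n)))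
      = 1 + y * Hf y + y^2 * (∑' n : ℕ, bb n * ((2*(n:ℝ)+1) * y ^ (2*n))) := by
  set f : ℕ → ℝ := fun m => bb m * ((2*(m:ℝ)+1) * y ^ (2*m)) with hf
  set S := ∑' n : ℕ, f n with hSdef
  have hSsum : HasSum f S := (summable_dterm hr0 hr1 hy).hasSum
  have hHsum : HasSum (fun n : ℕ => bb n * y ^ (2*n+1)) (Hf y) :=
    (summable_term hr0 hr1 hy).hasSum
  have hA : HasSum (fun n : ℕ => y * (bb n * y ^ (2*n+1)) + y^2 * f n)
      (y * Hf y + y^2 * S) := (hHsum.mul_left y).add (hSsum.mul_left (y^2))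
  have hshift : (fun n : ℕ => y * (bb n * y ^ (2*n+1)) + y^2 * f n)
      = (fun n : ℕ => f (n+1)) := by
    funext n
    simp only [hf]
    have hrec := bb_rec n
    push_cast
    linear_combination (-(y^(2*n) * y^2)) * hrec
  rw [hshift] at hA
  have hA2 := (hasSum_nat_add_iff (f := f) 1).1 hA
  simp only [Finset.range_one, Finset.sum_singleton] at hA2
  have h0 : f 0 = 1 := by simp [hf, bb_zero]
  rw [h0] at hA2
  have huniq := hSsum.unique hA2
  linarith [huniq]

lemma one_sub_sq_pos {y : ℝ} (hy : y ∈ Ioo (-r) r) : 0 < 1 - y^2 := by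
  have h := abs_lt.2 hy
  have : |y| < 1 := lt_trans h hr1
  nlinarith [abs_nonneg y, sq_abs y]

lemma const_of_deriv_zero {f : ℝ → ℝ} (h : ∀ y ∈ Ioo (-r) r, HasDerivAt f 0 y)
    {y : ℝ} (hy : y ∈ Ioo (-r) r) : f y = f 0 := by
  have h0 : (0:ℝ) ∈ Ioo (-r) r := Set.mem_Ioo.2 ⟨by linarith, hr0⟩
  refine (convex_Ioo (-r) r).is_const_of_fderivWithin_eq_zero
    (fun z hz => (h z hz).differentiableAt.differentiableWithinAt) ?_ hy h0
  intro z hz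
  rw [fderivWithin_of_isOpen isOpen_Ioo hz]
  have hd := (h z hz).hasFDerivAt.fderiv
  rw [hd]
  ext
  simp

lemma Hf_eq {y : ℝ} (hy : y ∈ Ioo (-r) r) :
    Hf y = Real.arcsin y / Real.sqrt (1 - y^2) := by
  set φ : ℝ → ℝ := fun z => Hf z * Real.sqrt (1 - z^2) - Real.arcsin z with hφ
  have hderiv : ∀ z ∈ Ioo (-r) r, HasDerivAt φ 0 z := by
    intro z hz
    have hz1 : 0 < 1 - z^2 := one_sub_sq_pos hr0 hr1 hz
    have hzsq : Real.sqrt (1 - z^2) > 0 := Real.sqrt_pos.2 hz1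
    have hzne : z ≠ -1 := by rintro rfl; have := hz.1; linarith
    have hzne' : z ≠ 1 := by rintro rfl; have := hz.2; linarith
    have hH := hasDerivAt_Hf hr0 hr1 hz
    set S := ∑' n : ℕ, bb n * ((2*(n:ℝ)+1) * z ^ (2*n)) with hSdef
    have hsqrt : HasDerivAt (fun w : ℝ => Real.sqrt (1 - w^2)) (-z / Real.sqrt (1 - z^2)) z := by
      have hinner : HasDerivAt (fun w : ℝ => 1 - w^2) (-(2*z)) z := by
        simpa using ((hasDerivAt_pow 2 z).const_sub 1)
      have := (Real.hasDerivAt_sqrt (ne_of_gt hz1)).comp z hinner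
      refine this.congr_deriv ?_
      field_simp
    have harc := Real.hasDerivAt_arcsin hzne hzne'
    have hprod := hH.mul hsqrt
    have htot := hprod.sub harc
    have hkey := key_identity hr0 hr1 hz
    rw [← hSdef] at hkey
    have hval : S * (1 - z^2) = 1 + z * Hf z := by linear_combination hkey
    have h2 : Real.sqrt (1 - z^2) * Real.sqrt (1 - z^2) = 1 - z^2 :=
      Real.mul_self_sqrt hz1.le
    have hne : Real.sqrt (1 - z^2) ≠ 0 := ne_of_gt hzsq
    have hzero : S * Real.sqrt (1 - z^2) + Hf z * (-z / Real.sqrt (1 - z^2))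
        - 1 / Real.sqrt (1 - z^2) = 0 := by
      field_simp
      linear_combination hval + S * h2
    rw [← hzero]
    exact htot
  have hcst := const_of_deriv_zero hr0 hr1 hderiv hy
  have hφ0 : φ 0 = 0 := by
    have hH0 : Hf 0 = 0 := by
      unfold Hf
      convert tsum_zero with n
      simp
    simp [hφ, hH0]
  have hz1 : 0 < 1 - y^2 := one_sub_sq_pos hr0 hr1 hy
  have hzsq : Real.sqrt (1 - y^2) > 0 := Real.sqrt_pos.2 hz1
  have hφy : φ y = 0 := by rw [hcst, hφ0]
  rw [hφ] at hφy
  simp only at hφy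
  rw [eq_div_iff (ne_of_gt hzsq)]
  linarith [hφy]

/-- the sum of the series for `arcsin y ^ 2`. -/
noncomputable def Ff (y : ℝ) : ℝ := ∑' n : ℕ, (bb n / ((n:ℝ)+1)) * y ^ (2*n+2)

omit hr0 hr1 in
lemma norm_term2_le {y : ℝ} (hy : y ∈ Ioo (-r) r) (n : ℕ) :
    ‖(bb n / ((n:ℝ)+1)) * y ^ (2*n+2)‖ ≤ r ^ (2*n+2) := by
  have hyr : |y| ≤ r := le_of_lt (abs_lt.2 hy)
  have h1 : |y| ^ (2*n+2) ≤ r ^ (2*n+2) := pow_le_pow_left₀ (abs_nonneg y) hyr _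
  have hb : bb n / ((n:ℝ)+1) ≤ 1 := by
    rw [div_le_one (by positivity)]
    calc bb n ≤ 1 := bb_le_one n
      _ ≤ (n:ℝ) + 1 := by linarith [Nat.cast_nonneg (α := ℝ) n]
  have hbp : 0 ≤ bb n / ((n:ℝ)+1) := div_nonneg (bb_pos n).le (by positivity)
  calc ‖(bb n / ((n:ℝ)+1)) * y ^ (2*n+2)‖ = (bb n / ((n:ℝ)+1)) * |y| ^ (2*n+2) := by
        rw [norm_mul, Real.norm_eq_abs, Real.norm_eq_abs, abs_of_nonneg hbp, abs_pow]
    _ ≤ 1 * (r ^ (2*n+2)) := mul_le_mul hb h1 (by positivity) zero_le_one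
    _ = _ := one_mul _

lemma sum_geo3 : Summable (fun n : ℕ => r ^ (2*n+2)) := by
  have hrr : r^2 < 1 := by nlinarith
  have h2 : Summable (fun n : ℕ => (r^2)^n) :=
    summable_geometric_of_lt_one (by positivity) hrr
  refine (h2.mul_left (r^2)).congr fun n => ?_
  rw [pow_add, pow_mul]
  ring

omit hr0 hr1 in
lemma hasDerivAt_term2 (n : ℕ) (y : ℝ) :
    HasDerivAt (fun z : ℝ => (bb n / ((n:ℝ)+1)) * z ^ (2*n+2))
      (2 * (bb n * y ^ (2*n+1))) y := by
  have h := (hasDerivAt_pow (2*n+2) y).const_mul (bb n / ((n:ℝ)+1))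
  refine h.congr_deriv ?_
  have hne : ((n:ℝ)+1) ≠ 0 := by positivity
  have he : 2*n+2-1 = 2*n+1 := by omega
  rw [he]
  push_cast
  field_simp

lemma hasDerivAt_Ff {y : ℝ} (hy : y ∈ Ioo (-r) r) :
    HasDerivAt Ff (2 * Hf y) y := by
  have h0 : (0:ℝ) ∈ Ioo (-r) r := Set.mem_Ioo.2 ⟨by linarith, hr0⟩
  have hmain := hasDerivAt_tsum_of_isPreconnected
    ((sum_geo2 hr0 hr1).mul_left 2) isOpen_Ioo
    (convex_Ioo _ _).isPreconnected
    (fun n z _ => hasDerivAt_term2 n z)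
    (fun n z hz => by
      rw [norm_mul, Real.norm_ofNat]
      have h := norm_term_le hz n
      linarith)
    h0 (Summable.of_norm_bounded (sum_geo3 hr0 hr1) (norm_term2_le h0)) hy
  have : (∑' n : ℕ, 2 * (bb n * y ^ (2*n+1))) = 2 * Hf y := by
    rw [tsum_mul_left]; rfl
  rw [this] at hmain
  exact hmain

lemma Ff_eq {y : ℝ} (hy : y ∈ Ioo (-r) r) : Ff y = Real.arcsin y ^ 2 := by
  set ψ : ℝ → ℝ := fun z => Ff z - Real.arcsin z ^ 2 with hψ
  have hderiv : ∀ z ∈ Ioo (-r) r, HasDerivAt ψ 0 z := by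
    intro z hz
    have hz1 : 0 < 1 - z^2 := one_sub_sq_pos hr0 hr1 hz
    have hzsq : Real.sqrt (1 - z^2) > 0 := Real.sqrt_pos.2 hz1
    have hzne : z ≠ -1 := by rintro rfl; have := hz.1; linarith
    have hzne' : z ≠ 1 := by rintro rfl; have := hz.2; linarith
    have harc := (Real.hasDerivAt_arcsin hzne hzne').pow 2
    have hF := hasDerivAt_Ff hr0 hr1 hz
    rw [Hf_eq hr0 hr1 hz] at hF
    have htot := hF.sub harc
    refine htot.congr_deriv ?_
    have hne : Real.sqrt (1 - z^2) ≠ 0 := ne_of_gt hzsq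
    field_simp
    norm_num
  have hcst := const_of_deriv_zero hr0 hr1 hderiv hy
  have hψ0 : ψ 0 = 0 := by
    have hF0 : Ff 0 = 0 := by
      unfold Ff
      convert tsum_zero with n
      simp
    simp [hψ, hF0]
  have : ψ y = 0 := by rw [hcst, hψ0]
  rw [hψ] at this
  simp only at this
  linarith [this]

end main

theorem arcsine_identity_13 (x : ℝ) (hx : |x| < 1) :
    HasSum (fun ℓ : ℕ =>
        (1 / 2) * ((2 * x) ^ (2 * (ℓ + 1)) /
          (((ℓ : ℝ) + 1) ^ 2 * (Nat.choose (2 * (ℓ + 1)) (ℓ + 1) : ℝ))))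
      ((Real.arcsin x) ^ 2) := by
  set r : ℝ := (|x| + 1) / 2 with hrdef
  have hr0 : 0 < r := by positivity
  have hr1 : r < 1 := by rw [hrdef]; linarith
  have hxr : x ∈ Ioo (-r) r := by
    have : |x| < r := by rw [hrdef]; linarith
    exact Set.mem_Ioo.2 ⟨(abs_lt.1 this).1, (abs_lt.1 this).2⟩
  have hsummable : Summable (fun n : ℕ => (bb n / ((n:ℝ)+1)) * x ^ (2*n+2)) :=
    Summable.of_norm_bounded (sum_geo3 hr0 hr1) (norm_term2_le hxr)
  have hhs : HasSum (fun n : ℕ => (bb n / ((n:ℝ)+1)) * x ^ (2*n+2)) (Ff x) :=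
    hsummable.hasSum
  rw [Ff_eq hr0 hr1 hxr] at hhs
  refine hhs.congr_fun fun ℓ => ?_
  have hC := choose_cast_pos ℓ
  have hne : ((ℓ:ℝ)+1) ≠ 0 := by positivity
  rw [bb]
  have hpow : (2 * x) ^ (2 * (ℓ + 1)) = 4 ^ (ℓ+1) * x ^ (2*ℓ+2) := by
    have h4 : (4:ℝ)^(ℓ+1) = 2^(2*(ℓ+1)) := by
      rw [show (4:ℝ) = 2^2 by norm_num, ← pow_mul]
    rw [mul_pow, h4]
    ring
  rw [hpow]
  rw [div_div, div_mul_eq_mul_div, one_mul, div_div, div_mul_eq_mul_div,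
    div_eq_div_iff (by positivity) (by positivity)]
  ring
end

section
/- For all real x with |x| < 1, (arcsin x)³ = 6·∑_{ℓ=0}^{∞} ((2ℓ+1)!!)² · (∑_{k=0}^{ℓ} 1/(2k+1)²) · x^(2ℓ+3)/(2ℓ+3)!. -/
open Real Set

namespace Arcsin3

noncomputable section

/-! ### Coefficient sequences -/

def b : ℕ → ℝ
  | 0 => 1
  | n + 1 => b n * (2 * n + 1) / (2 * n + 2)

def a (n : ℕ) : ℝ := b n / (2 * n + 1)

def d : ℕ → ℝ
  | 0 => 0
  | n + 1 => ((2 * n + 1) * d n + 2 * a n) / (2 * n + 2)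

lemma b_pos (n : ℕ) : 0 < b n := by
  induction n with
  | zero => norm_num [b]
  | succ n ih => rw [b]; positivity

lemma b_le_one (n : ℕ) : b n ≤ 1 := by
  induction n with
  | zero => norm_num [b]
  | succ n ih =>
    rw [b, div_le_one (by positivity)]
    nlinarith [b_pos n]

lemma a_nonneg (n : ℕ) : 0 ≤ a n := by
  have := b_pos n; rw [a]; positivity

lemma a_le_one (n : ℕ) : a n ≤ 1 := by
  rw [a, div_le_one (by positivity)]
  nlinarith [b_le_one n, b_pos n]

lemma d_nonneg (n : ℕ) : 0 ≤ d n := by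
  induction n with
  | zero => norm_num [d]
  | succ n ih =>
    rw [d]
    have := a_nonneg n
    positivity

lemma d_le_two (n : ℕ) : d n ≤ 2 := by
  induction n with
  | zero => norm_num [d]
  | succ n ih =>
    rw [d, div_le_iff₀ (by positivity : (0:ℝ) < 2 * n + 2)]
    nlinarith [a_le_one n, d_nonneg n]

/-! ### Power series machinery -/

def shf (e : ℕ → ℝ) (n : ℕ) : ℝ := (n + 1) * e (n + 1)

def psh (e : ℕ → ℝ) : ℕ → ℝ
  | 0 => 0
  | n + 1 => e n

def F (e : ℕ → ℝ) (x : ℝ) : ℝ := ∑' n, e n * x ^ n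

lemma summable_sq_geo (M : ℝ) {r : ℝ} (hr : |r| < 1) :
    Summable (fun n : ℕ => M * (n + 1) ^ 2 * r ^ n) := by
  have hax : ‖r‖ < 1 := by rwa [Real.norm_eq_abs]
  have h2 : Summable (fun n : ℕ => (n : ℝ) ^ 2 * r ^ n) :=
    summable_pow_mul_geometric_of_norm_lt_one 2 hax
  have h1 : Summable (fun n : ℕ => (n : ℝ) ^ 1 * r ^ n) :=
    summable_pow_mul_geometric_of_norm_lt_one 1 hax
  have h0 : Summable (fun n : ℕ => r ^ n) := summable_geometric_of_norm_lt_one hax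
  have := ((h2.mul_left M).add ((h1.mul_left (2 * M)))).add (h0.mul_left M)
  refine this.congr fun n => ?_
  ring

lemma summable_poly {e : ℕ → ℝ} {M : ℝ} (hM : ∀ n, |e n| ≤ M * (n + 1) ^ 2)
    {x : ℝ} (hx : |x| < 1) : Summable fun n => e n * x ^ n := by
  have hg : Summable (fun n : ℕ => M * (n + 1) ^ 2 * |x| ^ n) :=
    summable_sq_geo M (by rwa [abs_abs])
  refine Summable.of_norm_bounded hg fun n => ?_
  rw [norm_mul, norm_pow, Real.norm_eq_abs, Real.norm_eq_abs]
  have h1 : (0:ℝ) ≤ |x| ^ n := by positivity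
  exact mul_le_mul_of_nonneg_right (hM n) h1

lemma bdd_poly {e : ℕ → ℝ} {M : ℝ} (hM : ∀ n, |e n| ≤ M) (n : ℕ) :
    |e n| ≤ M * (n + 1) ^ 2 := by
  have h0 : (0:ℝ) ≤ M := le_trans (abs_nonneg _) (hM 0)
  have h1 : (1:ℝ) ≤ ((n:ℝ) + 1) ^ 2 := by nlinarith [Nat.cast_nonneg (α := ℝ) n]
  calc |e n| ≤ M := hM n
    _ = M * 1 := by ring
    _ ≤ M * (n + 1) ^ 2 := by nlinarith

lemma shf_poly {e : ℕ → ℝ} {M : ℝ} (hM : ∀ n, |e n| ≤ M) (n : ℕ) :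
    |shf e n| ≤ M * (n + 1) ^ 2 := by
  have h0 : (0:ℝ) ≤ M := le_trans (abs_nonneg _) (hM 0)
  have : |shf e n| = ((n:ℝ) + 1) * |e (n + 1)| := by
    rw [shf, abs_mul, abs_of_nonneg (by positivity : (0:ℝ) ≤ (n:ℝ) + 1)]
  rw [this]
  have h2 := hM (n + 1)
  have hn : (0:ℝ) ≤ (n:ℝ) := Nat.cast_nonneg n
  calc ((n:ℝ) + 1) * |e (n + 1)| ≤ ((n:ℝ) + 1) * M :=
        mul_le_mul_of_nonneg_left h2 (by linarith)
    _ ≤ M * ((n:ℝ) + 1) ^ 2 := by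
        nlinarith [mul_nonneg (mul_nonneg h0 hn) (by linarith : (0:ℝ) ≤ (n:ℝ)+1)]

lemma hasSum_psh {e : ℕ → ℝ} {x S : ℝ} (h : HasSum (fun n => e n * x ^ n) S) :
    HasSum (fun n => psh e n * x ^ n) (x * S) := by
  have h2 : HasSum (fun n => psh e (n + 1) * x ^ (n + 1)) (x * S) := by
    refine (h.mul_left x).congr_fun fun n => ?_
    show psh e (n + 1) * x ^ (n + 1) = x * (e n * x ^ n)
    show e n * x ^ (n + 1) = x * (e n * x ^ n)
    ring
  have h3 := (hasSum_nat_add_iff (f := fun n => psh e n * x ^ n) 1).1 h2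
  simpa [psh] using h3

lemma F_zero (e : ℕ → ℝ) : F e 0 = e 0 := by
  rw [F]
  rw [tsum_eq_single 0 (fun n hn => by simp [zero_pow hn])]
  simp

lemma hasDerivAt_F {e : ℕ → ℝ} {M : ℝ} (hM : ∀ n, |e n| ≤ M) {x : ℝ} (hx : |x| < 1) :
    HasDerivAt (F e) (F (shf e) x) x := by
  have hM0 : 0 ≤ M := le_trans (abs_nonneg _) (hM 0)
  set r : ℝ := (1 + |x|) / 2 with hr
  have habs := abs_nonneg x
  have hr0 : 0 < r := by positivity
  have hr1 : r < 1 := by rw [hr]; linarith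
  have hxr : |x| < r := by rw [hr]; linarith
  have hu : Summable (fun n : ℕ => (M / r) * (n + 1) ^ 2 * r ^ n) :=
    summable_sq_geo _ (by rwa [abs_of_pos hr0])
  have hder : ∀ (n : ℕ) (y : ℝ), y ∈ Metric.ball (0:ℝ) r →
      HasDerivAt (fun z => e n * z ^ n) (e n * (n * y ^ (n - 1))) y :=
    fun n y _ => (hasDerivAt_pow n y).const_mul (e n)
  have hbound : ∀ (n : ℕ) (y : ℝ), y ∈ Metric.ball (0:ℝ) r →
      ‖e n * (n * y ^ (n - 1))‖ ≤ (M / r) * (n + 1) ^ 2 * r ^ n := by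
    intro n y hy
    have hyr : |y| < r := by simpa [Real.dist_eq] using hy
    have hy0 := abs_nonneg y
    match n with
    | 0 => simp; positivity
    | n + 1 =>
      have hpow : |y| ^ n ≤ r ^ n := pow_le_pow_left₀ hy0 hyr.le n
      have hrpos : (0:ℝ) < r ^ n := by positivity
      have e1 : ‖e (n+1) * ((n+1 : ℕ) * y ^ ((n+1) - 1))‖ ≤ M * (((n:ℝ)+1) * r ^ n) := by
        rw [norm_mul, Real.norm_eq_abs, Real.norm_eq_abs, abs_mul, abs_pow]
        push_cast
        try simp only [Nat.add_sub_cancel]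
        have h1 : |(e (n+1))| * (((n:ℝ)+1) * |y| ^ n) ≤ M * (((n:ℝ)+1) * r ^ n) := by
          apply mul_le_mul (hM _) _ (by positivity) hM0
          apply mul_le_mul_of_nonneg_left hpow (by positivity)
        convert h1 using 2
        rw [abs_of_nonneg (by positivity : (0:ℝ) ≤ (n:ℝ)+1)]
      refine e1.trans ?_
      have e2 : (M / r) * (((n:ℕ)+1:ℕ) + 1 : ℝ) ^ 2 * r ^ (n+1) = M * (((n:ℝ)+2) ^ 2 * r ^ n) := by
        push_cast
        field_simp
        ring
      rw [e2]
      have h3 : ((n:ℝ)+1) ≤ ((n:ℝ)+2) ^ 2 := by nlinarith [Nat.cast_nonneg (α := ℝ) n]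
      have h4 := mul_le_mul_of_nonneg_right h3 hrpos.le
      nlinarith [mul_le_mul_of_nonneg_left h4 hM0]
  have hx0 : Summable fun n => e n * x ^ n := summable_poly (bdd_poly hM) hx
  have hxball : x ∈ Metric.ball (0:ℝ) r := by simpa [Real.dist_eq] using hxr
  have key := hasDerivAt_tsum_of_isPreconnected hu Metric.isOpen_ball
    (convex_ball (0:ℝ) r).isPreconnected hder hbound hxball hx0 hxball
  have hsum : (∑' n, e n * (n * x ^ (n - 1))) = F (shf e) x := by
    have hg : Summable fun n => shf e n * x ^ n := summable_poly (shf_poly hM) hx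
    have h2 : HasSum (fun n : ℕ => (fun m : ℕ => e m * (m * x ^ (m - 1))) (n + 1)) (F (shf e) x) := by
      refine hg.hasSum.congr_fun fun n => ?_
      show e (n+1) * ((n+1 : ℕ) * x ^ ((n+1) - 1)) = shf e n * x ^ n
      simp only [Nat.add_sub_cancel, shf]
      push_cast
      ring
    have h3 := (hasSum_nat_add_iff (f := fun m : ℕ => e m * (m * x ^ (m - 1))) 1).1 h2
    simp only [Finset.range_one, Finset.sum_singleton, Nat.cast_zero, zero_mul, mul_zero,
      add_zero] at h3
    exact h3.tsum_eq
  have h4 : F (shf e) x = ∑' n, e n * (n * x ^ (n - 1)) := hsum.symm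
  rw [h4]
  exact key

/-! ### Integration lemmas -/

lemma eqOn_of_deriv {f g h : ℝ → ℝ}
    (hf : ∀ y ∈ Ioo (-1:ℝ) 1, HasDerivAt f (h y) y)
    (hg : ∀ y ∈ Ioo (-1:ℝ) 1, HasDerivAt g (h y) y)
    (h0 : f 0 = g 0) {x : ℝ} (hx : x ∈ Ioo (-1:ℝ) 1) : f x = g x := by
  have h0m : (0:ℝ) ∈ Ioo (-1:ℝ) 1 := by norm_num
  have key : (fun y => f y - g y) x = (fun y => f y - g y) 0 := by
    apply (convex_Ioo (-1:ℝ) 1).is_const_of_fderivWithin_eq_zero (𝕜 := ℝ) ?_ ?_ hx h0m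
    · intro y hy
      exact ((hf y hy).sub (hg y hy)).differentiableAt.differentiableWithinAt
    · intro y hy
      rw [fderivWithin_of_isOpen isOpen_Ioo hy]
      have hd : HasDerivAt (fun y => f y - g y) 0 y := by
        have := (hf y hy).sub (hg y hy)
        rwa [sub_self] at this
      rw [hd.hasFDerivAt.fderiv]
      ext z
      simp
  simp only at key
  linarith [key]

lemma hasDerivAt_sqrt_one_sub_sq {y : ℝ} (hy : y ∈ Ioo (-1:ℝ) 1) :
    HasDerivAt (fun z : ℝ => Real.sqrt (1 - z ^ 2)) (-y / Real.sqrt (1 - y ^ 2)) y := by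
  obtain ⟨h1, h2⟩ := hy
  have hq : 0 < 1 - y ^ 2 := by nlinarith
  have hin : HasDerivAt (fun z : ℝ => 1 - z ^ 2) (-(2 * y)) y := by
    simpa using ((hasDerivAt_pow 2 y).const_sub 1)
  have h3 := hin.sqrt hq.ne'
  convert h3 using 1
  have hs : Real.sqrt (1 - y ^ 2) > 0 := Real.sqrt_pos.2 hq
  field_simp

lemma sqrt_one_sub_sq_pos {y : ℝ} (hy : y ∈ Ioo (-1:ℝ) 1) :
    0 < Real.sqrt (1 - y ^ 2) := by
  obtain ⟨h1, h2⟩ := hy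
  apply Real.sqrt_pos.2
  nlinarith

/-! ### Even/odd coefficient sequences -/

def eB (n : ℕ) : ℝ := if Even n then b (n / 2) else 0
def eA (n : ℕ) : ℝ := if Odd n then a (n / 2) else 0
def eD (n : ℕ) : ℝ := if Even n then d (n / 2) else 0
def eC (n : ℕ) : ℝ := if n = 0 then 0 else 3 * eD (n - 1) / n

lemma eB_even (k : ℕ) : eB (2 * k) = b k := by
  have h2 : (2 * k) / 2 = k := by omega
  rw [eB, if_pos ⟨k, two_mul k⟩, h2]

lemma eB_odd (k : ℕ) : eB (2 * k + 1) = 0 := by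
  rw [eB, if_neg]
  rw [Nat.even_iff]; omega

lemma eA_odd (k : ℕ) : eA (2 * k + 1) = a k := by
  have h2 : (2 * k + 1) / 2 = k := by omega
  rw [eA, if_pos ⟨k, by omega⟩, h2]

lemma eA_even (k : ℕ) : eA (2 * k) = 0 := by
  rw [eA, if_neg]
  rw [Nat.odd_iff]; omega

lemma eD_even (k : ℕ) : eD (2 * k) = d k := by
  have h2 : (2 * k) / 2 = k := by omega
  rw [eD, if_pos ⟨k, two_mul k⟩, h2]

lemma eD_odd (k : ℕ) : eD (2 * k + 1) = 0 := by
  rw [eD, if_neg]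
  rw [Nat.even_iff]; omega

lemma eB_bdd (n : ℕ) : |eB n| ≤ 1 := by
  rw [eB]
  split
  · rw [abs_of_pos (b_pos _)]; exact b_le_one _
  · norm_num

lemma eA_bdd (n : ℕ) : |eA n| ≤ 1 := by
  rw [eA]
  split
  · rw [abs_of_nonneg (a_nonneg _)]; exact a_le_one _
  · norm_num

lemma eD_bdd (n : ℕ) : |eD n| ≤ 2 := by
  rw [eD]
  split
  · rw [abs_of_nonneg (d_nonneg _)]; exact d_le_two _
  · norm_num

lemma eC_bdd (n : ℕ) : |eC n| ≤ 6 := by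
  rw [eC]
  split
  · norm_num
  · rename_i hn
    have h1 : (1:ℝ) ≤ (n:ℝ) := by
      have : 1 ≤ n := Nat.one_le_iff_ne_zero.2 hn
      exact_mod_cast this
    rw [abs_div, abs_mul]
    have h2 : |(3:ℝ)| = 3 := by norm_num
    rw [h2, abs_of_nonneg (by linarith : (0:ℝ) ≤ (n:ℝ))]
    rw [div_le_iff₀ (by linarith)]
    have := eD_bdd (n - 1)
    nlinarith


lemma deriv_combine {A B q s y : ℝ} (hs : s ≠ 0) (hss : s * s = q) :
    A * s + B * (-y / s) = (q * A - y * B) / s := by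
  field_simp
  linear_combination A * hss

/-! ### Coefficient identities -/

lemma coeff_A : shf eA = eB := by
  funext n
  rcases Nat.even_or_odd n with ⟨k, hk⟩ | ⟨k, hk⟩
  · obtain rfl : n = 2 * k := by omega
    rw [shf, show 2 * k + 1 = 2 * k + 1 from rfl, eA_odd, eB_even, a]
    have h1 : (0:ℝ) < 2 * (k:ℝ) + 1 := by positivity
    push_cast
    field_simp
  · obtain rfl : n = 2 * k + 1 := by omega
    rw [shf, show 2 * k + 1 + 1 = 2 * (k + 1) from by omega, eA_even, eB_odd]
    ring

lemma coeff_B (n : ℕ) : shf eB n - psh (psh (shf eB)) n = psh eB n := by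
  match n with
  | 0 =>
    show shf eB 0 - 0 = 0
    rw [shf, show (0:ℕ) + 1 = 2 * 0 + 1 from rfl, eB_odd]
    ring
  | 1 =>
    show shf eB 1 - 0 = eB 0
    rw [shf, show (1:ℕ) + 1 = 2 * 1 from rfl, eB_even, show (0:ℕ) = 2 * 0 from rfl, eB_even]
    norm_num [b]
  | (m + 2) =>
    show shf eB (m + 2) - shf eB m = eB (m + 1)
    rcases Nat.even_or_odd m with ⟨k, hk⟩ | ⟨k, hk⟩
    · obtain rfl : m = 2 * k := by omega
      rw [shf, shf, show 2 * k + 2 + 1 = 2 * (k + 1) + 1 from by omega, eB_odd,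
        show 2 * k + 1 = 2 * k + 1 from rfl, eB_odd]
      ring
    · obtain rfl : m = 2 * k + 1 := by omega
      rw [shf, shf, show 2 * k + 1 + 2 + 1 = 2 * (k + 2) from by omega, eB_even,
        show 2 * k + 1 + 1 = 2 * (k + 1) from by omega, eB_even]
      rw [show k + 2 = (k + 1) + 1 from rfl, b]
      have h1 : (0:ℝ) < 2 * ((k:ℝ) + 1) + 2 := by positivity
      push_cast
      field_simp
      ring

lemma coeff_D (n : ℕ) : shf eD n - psh (psh (shf eD)) n - psh eD n = 2 * eA n := by
  match n with
  | 0 =>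
    show shf eD 0 - 0 - 0 = 2 * eA 0
    have h1 : eD 1 = 0 := eD_odd 0
    have h2 : eA 0 = 0 := eA_even 0
    rw [shf, h1, h2]
    ring
  | 1 =>
    show shf eD 1 - 0 - eD 0 = 2 * eA 1
    have h1 : eD 2 = d 1 := eD_even 1
    have h2 : eD 0 = d 0 := eD_even 0
    have h3 : eA 1 = a 0 := eA_odd 0
    rw [shf, show (1:ℕ) + 1 = 2 from rfl, h1, h2, h3]
    norm_num [d]
  | (m + 2) =>
    show shf eD (m + 2) - shf eD m - eD (m + 1) = 2 * eA (m + 2)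
    rcases Nat.even_or_odd m with ⟨k, hk⟩ | ⟨k, hk⟩
    · obtain rfl : m = 2 * k := by omega
      rw [shf, shf, show 2 * k + 2 + 1 = 2 * (k + 1) + 1 from by omega, eD_odd,
        show 2 * k + 1 = 2 * k + 1 from rfl, eD_odd,
        show 2 * k + 2 = 2 * (k + 1) from by omega, eA_even]
      ring
    · obtain rfl : m = 2 * k + 1 := by omega
      rw [shf, shf, show 2 * k + 1 + 2 + 1 = 2 * (k + 2) from by omega, eD_even,
        show 2 * k + 1 + 1 = 2 * (k + 1) from by omega, eD_even,
        show 2 * k + 1 + 2 = 2 * (k + 1) + 1 from by omega, eA_odd]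
      rw [show k + 2 = (k + 1) + 1 from rfl, d]
      have h1 : (0:ℝ) < 2 * ((k:ℝ) + 1) + 2 := by positivity
      push_cast
      field_simp
      ring

lemma coeff_C : shf eC = fun n => 3 * eD n := by
  funext n
  rw [shf, eC, if_neg (Nat.succ_ne_zero n)]
  have h1 : ((n:ℝ) + 1) ≠ 0 := by positivity
  have h2 : (n + 1 : ℕ) - 1 = n := by omega
  rw [h2]
  push_cast
  field_simp

/-! ### ODE identities -/

lemma ode_B {x : ℝ} (hx : |x| < 1) : (1 - x ^ 2) * F (shf eB) x = x * F eB x := by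
  have SB : HasSum (fun n => eB n * x ^ n) (F eB x) :=
    (summable_poly (bdd_poly eB_bdd) hx).hasSum
  have S1 : HasSum (fun n => shf eB n * x ^ n) (F (shf eB) x) :=
    (summable_poly (shf_poly eB_bdd) hx).hasSum
  have hpsh := hasSum_psh SB
  have hpp := hasSum_psh (hasSum_psh S1)
  have hsub := S1.sub hpp
  have heq : (fun n => shf eB n * x ^ n - psh (psh (shf eB)) n * x ^ n)
      = fun n => psh eB n * x ^ n := by
    funext n
    rw [← sub_mul, coeff_B n]
  rw [heq] at hsub
  have huniq := hsub.unique hpsh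
  linear_combination huniq

lemma ode_D {x : ℝ} (hx : |x| < 1) :
    (1 - x ^ 2) * F (shf eD) x - x * F eD x = 2 * F eA x := by
  have SD : HasSum (fun n => eD n * x ^ n) (F eD x) :=
    (summable_poly (bdd_poly eD_bdd) hx).hasSum
  have SA : HasSum (fun n => eA n * x ^ n) (F eA x) :=
    (summable_poly (bdd_poly eA_bdd) hx).hasSum
  have S1 : HasSum (fun n => shf eD n * x ^ n) (F (shf eD) x) :=
    (summable_poly (shf_poly eD_bdd) hx).hasSum
  have hpsh := hasSum_psh SD
  have hpp := hasSum_psh (hasSum_psh S1)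
  have hsub := (S1.sub hpp).sub hpsh
  have heq : (fun n => shf eD n * x ^ n - psh (psh (shf eD)) n * x ^ n - psh eD n * x ^ n)
      = fun n => 2 * (eA n * x ^ n) := by
    funext n
    rw [← sub_mul, ← sub_mul, coeff_D n]
    ring
  rw [heq] at hsub
  have huniq := hsub.unique (SA.mul_left 2)
  linear_combination huniq

/-! ### The four series identities -/

lemma FB {x : ℝ} (hx : x ∈ Ioo (-1:ℝ) 1) : F eB x * Real.sqrt (1 - x ^ 2) = 1 := by
  refine eqOn_of_deriv (f := fun y => F eB y * Real.sqrt (1 - y ^ 2)) (g := fun _ => 1)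
    (h := fun _ => 0) ?_ ?_ ?_ hx
  · intro y hy
    have hy1 : |y| < 1 := abs_lt.2 ⟨hy.1, hy.2⟩
    have hq : 0 < 1 - y ^ 2 := by
      obtain ⟨hl, hr⟩ := hy; nlinarith
    have hs := sqrt_one_sub_sq_pos hy
    have hmul := (hasDerivAt_F eB_bdd hy1).mul (hasDerivAt_sqrt_one_sub_sq hy)
    refine hmul.congr_deriv ?_
    have hode := ode_B hy1
    have hss : Real.sqrt (1 - y ^ 2) * Real.sqrt (1 - y ^ 2) = 1 - y ^ 2 :=
      Real.mul_self_sqrt hq.le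
    rw [deriv_combine hs.ne' hss, hode]
    simp
  · intro y _
    exact hasDerivAt_const y 1
  · show F eB 0 * Real.sqrt (1 - 0 ^ 2) = 1
    rw [F_zero]
    have h1 : eB 0 = b 0 := eB_even 0
    rw [h1]
    norm_num [b]

lemma FB' {x : ℝ} (hx : x ∈ Ioo (-1:ℝ) 1) :
    F eB x = 1 / Real.sqrt (1 - x ^ 2) := by
  have hs := sqrt_one_sub_sq_pos hx
  rw [eq_div_iff hs.ne']
  exact FB hx

lemma FA {x : ℝ} (hx : x ∈ Ioo (-1:ℝ) 1) : F eA x = Real.arcsin x := by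
  refine eqOn_of_deriv (f := F eA) (g := Real.arcsin)
    (h := fun y => 1 / Real.sqrt (1 - y ^ 2)) ?_ ?_ ?_ hx
  · intro y hy
    have hy1 : |y| < 1 := abs_lt.2 ⟨hy.1, hy.2⟩
    have hd := hasDerivAt_F eA_bdd hy1
    rw [coeff_A] at hd
    rwa [FB' hy] at hd
  · intro y hy
    exact Real.hasDerivAt_arcsin hy.1.ne' hy.2.ne
  · show F eA 0 = Real.arcsin 0
    rw [F_zero, Real.arcsin_zero]
    exact eA_even 0

lemma FD {x : ℝ} (hx : x ∈ Ioo (-1:ℝ) 1) :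
    F eD x * Real.sqrt (1 - x ^ 2) = Real.arcsin x ^ 2 := by
  refine eqOn_of_deriv (f := fun y => F eD y * Real.sqrt (1 - y ^ 2))
    (g := fun y => Real.arcsin y ^ 2)
    (h := fun y => 2 * Real.arcsin y / Real.sqrt (1 - y ^ 2)) ?_ ?_ ?_ hx
  · intro y hy
    have hy1 : |y| < 1 := abs_lt.2 ⟨hy.1, hy.2⟩
    have hq : 0 < 1 - y ^ 2 := by
      obtain ⟨hl, hr⟩ := hy; nlinarith
    have hs := sqrt_one_sub_sq_pos hy
    have hmul := (hasDerivAt_F eD_bdd hy1).mul (hasDerivAt_sqrt_one_sub_sq hy)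
    refine hmul.congr_deriv ?_
    have hode := ode_D hy1
    rw [FA hy] at hode
    have hss : Real.sqrt (1 - y ^ 2) * Real.sqrt (1 - y ^ 2) = 1 - y ^ 2 :=
      Real.mul_self_sqrt hq.le
    rw [deriv_combine hs.ne' hss, hode]
  · intro y hy
    have hd := (Real.hasDerivAt_arcsin hy.1.ne' hy.2.ne).pow 2
    refine hd.congr_deriv ?_
    push_cast
    ring
  · show F eD 0 * Real.sqrt (1 - 0 ^ 2) = Real.arcsin 0 ^ 2
    rw [F_zero, Real.arcsin_zero]
    have h1 : eD 0 = d 0 := eD_even 0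
    rw [h1]
    norm_num [d]

lemma FD' {x : ℝ} (hx : x ∈ Ioo (-1:ℝ) 1) :
    F eD x = Real.arcsin x ^ 2 / Real.sqrt (1 - x ^ 2) := by
  have hs := sqrt_one_sub_sq_pos hx
  rw [eq_div_iff hs.ne']
  exact FD hx

lemma FC {x : ℝ} (hx : x ∈ Ioo (-1:ℝ) 1) : F eC x = Real.arcsin x ^ 3 := by
  refine eqOn_of_deriv (f := F eC) (g := fun y => Real.arcsin y ^ 3)
    (h := fun y => 3 * Real.arcsin y ^ 2 / Real.sqrt (1 - y ^ 2)) ?_ ?_ ?_ hx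
  · intro y hy
    have hy1 : |y| < 1 := abs_lt.2 ⟨hy.1, hy.2⟩
    have hd := hasDerivAt_F eC_bdd hy1
    rw [coeff_C] at hd
    have h3 : F (fun n => 3 * eD n) y = 3 * F eD y := by
      rw [F, F, ← tsum_mul_left]
      congr 1
      funext n
      ring
    rw [h3, FD' hy] at hd
    convert hd using 1
    ring
  · intro y hy
    have hs := sqrt_one_sub_sq_pos hy
    have hd := (Real.hasDerivAt_arcsin hy.1.ne' hy.2.ne).pow 3
    refine hd.congr_deriv ?_
    push_cast
    ring
  · show F eC 0 = Real.arcsin 0 ^ 3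
    rw [F_zero, Real.arcsin_zero]
    norm_num [eC]

/-! ### Closed forms for the coefficients -/

lemma df_step (n : ℕ) : Nat.doubleFactorial (2 * (n + 1) + 1)
    = (2 * n + 3) * Nat.doubleFactorial (2 * n + 1) := by
  rw [show 2 * (n + 1) + 1 = (2 * n + 1) + 2 from by omega, Nat.doubleFactorial_add_two,
    show 2 * n + 1 + 2 = 2 * n + 3 from by omega]

lemma fac_step (n : ℕ) : Nat.factorial (2 * (n + 1) + 2)
    = (2 * n + 4) * ((2 * n + 3) * Nat.factorial (2 * n + 2)) := by
  rw [show 2 * (n + 1) + 2 = (2 * n + 3) + 1 from by omega, Nat.factorial_succ,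
    show 2 * n + 3 = (2 * n + 2) + 1 from by omega, Nat.factorial_succ]

lemma b_closed (n : ℕ) : b (n + 1)
    = (Nat.doubleFactorial (2 * n + 1) : ℝ) ^ 2 / (Nat.factorial (2 * n + 2) : ℝ) := by
  induction n with
  | zero =>
    rw [b]
    have h1 : Nat.doubleFactorial (2 * 0 + 1) = 1 := rfl
    have h2 : Nat.factorial (2 * 0 + 2) = 2 := rfl
    rw [h1, h2]
    norm_num [b]
  | succ n ih =>
    rw [b, ih, df_step, fac_step]
    have hf : ((Nat.factorial (2 * n + 2) : ℝ)) ≠ 0 :=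
      Nat.cast_ne_zero.2 (Nat.factorial_ne_zero _)
    push_cast
    field_simp
    ring

lemma d_closed (n : ℕ) : d (n + 1)
    = 2 * (Nat.doubleFactorial (2 * n + 1) : ℝ) ^ 2
      * (∑ k ∈ Finset.range (n + 1), 1 / (2 * (k : ℝ) + 1) ^ 2)
      / (Nat.factorial (2 * n + 2) : ℝ) := by
  induction n with
  | zero =>
    rw [d]
    have h1 : Nat.doubleFactorial (2 * 0 + 1) = 1 := rfl
    have h2 : Nat.factorial (2 * 0 + 2) = 2 := rfl
    rw [h1, h2, Finset.sum_range_one]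
    norm_num [d, a, b]
  | succ n ih =>
    rw [d]
    conv_rhs => rw [Finset.sum_range_succ]
    rw [ih, a, b_closed, df_step, fac_step]
    have hf : ((Nat.factorial (2 * n + 2) : ℝ)) ≠ 0 :=
      Nat.cast_ne_zero.2 (Nat.factorial_ne_zero _)
    have h3 : ((2:ℝ) * (n + 1) + 1) ≠ 0 := by positivity
    have h4 : ((2:ℝ) * n + 3) ≠ 0 := by positivity
    push_cast
    field_simp
    ring

end

end Arcsin3

theorem arcsine_identity_14 (x : ℝ) (hx : |x| < 1) :
    HasSum (fun ℓ : ℕ =>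
        6 * (Nat.doubleFactorial (2 * ℓ + 1) : ℝ) ^ 2 *
          (∑ k ∈ Finset.range (ℓ + 1), 1 / (2 * (k : ℝ) + 1) ^ 2) *
          x ^ (2 * ℓ + 3) / (Nat.factorial (2 * ℓ + 3) : ℝ))
      ((Real.arcsin x) ^ 3) := by
  have hxI : x ∈ Set.Ioo (-1:ℝ) 1 := ⟨(abs_lt.1 hx).1, (abs_lt.1 hx).2⟩
  have hsum : HasSum (fun n => Arcsin3.eC n * x ^ n) (Real.arcsin x ^ 3) := by
    rw [← Arcsin3.FC hxI]
    exact (Arcsin3.summable_poly (Arcsin3.bdd_poly Arcsin3.eC_bdd) hx).hasSum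
  have hinj : Function.Injective (fun ℓ : ℕ => 2 * ℓ + 3) := by
    intro p q h
    simp only at h
    omega
  have hzero : ∀ n, n ∉ Set.range (fun ℓ : ℕ => 2 * ℓ + 3) →
      Arcsin3.eC n * x ^ n = 0 := by
    intro n hn
    have hC : Arcsin3.eC n = 0 := by
      match n with
      | 0 => simp [Arcsin3.eC]
      | 1 =>
        have h1 : Arcsin3.eD 0 = Arcsin3.d 0 := Arcsin3.eD_even 0
        simp [Arcsin3.eC, h1, Arcsin3.d]
      | (m + 2) =>
        rcases Nat.even_or_odd m with ⟨k, hk⟩ | ⟨k, hk⟩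
        · obtain rfl : m = 2 * k := by omega
          rw [Arcsin3.eC, if_neg (by omega : ¬(2 * k + 2 = 0)),
            show 2 * k + 2 - 1 = 2 * k + 1 from by omega, Arcsin3.eD_odd]
          norm_num
        · obtain rfl : m = 2 * k + 1 := by omega
          exact absurd ⟨k, by show 2 * k + 3 = 2 * k + 1 + 2; omega⟩ hn
    rw [hC, zero_mul]
  have h2 := (Function.Injective.hasSum_iff hinj hzero).2 hsum
  refine h2.congr_fun fun ℓ => ?_
  show 6 * (Nat.doubleFactorial (2 * ℓ + 1) : ℝ) ^ 2 *
          (∑ k ∈ Finset.range (ℓ + 1), 1 / (2 * (k : ℝ) + 1) ^ 2) *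
          x ^ (2 * ℓ + 3) / (Nat.factorial (2 * ℓ + 3) : ℝ)
      = Arcsin3.eC (2 * ℓ + 3) * x ^ (2 * ℓ + 3)
  rw [Arcsin3.eC, if_neg (by omega : ¬(2 * ℓ + 3 = 0)),
    show 2 * ℓ + 3 - 1 = 2 * (ℓ + 1) from by omega, Arcsin3.eD_even, Arcsin3.d_closed,
    show 2 * ℓ + 3 = (2 * ℓ + 2) + 1 from by omega, Nat.factorial_succ]
  have hf : ((Nat.factorial (2 * ℓ + 2) : ℝ)) ≠ 0 :=
    Nat.cast_ne_zero.2 (Nat.factorial_ne_zero _)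
  push_cast
  field_simp
  ring
end
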